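/- arXiv:1607.03655 — 13 statements merged into one kernel-verified Lean document; each statement's English description precedes it below -/
import Mathlib

section
/- Let Ω be a countable linearly ordered set with at least two elements. Then the set of idempotent order-preserving maps f : ℚ → ℚ whose image (with the induced order) is order-isomorphic to Ω has cardinality 2^ℵ0 (the cardinality of the continuum). -/
/-!
Transport everything along an order isomorphism `Ω ×ₗ ℚ ≃o ℚ` (Cantor's back-and-forth theorem).
On `Ω ×ₗ ℚ`, whenever `g : Ω → Ω ×ₗ ℚ` is strictly monotone and `φ` is a monotone left inverse
of `g`, the map `g ∘ φ` is an idempotent with image `range g ≃o Ω`.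

If `Ω` is infinite, the graphs `g x = (x, c x)` of the maps `c : Ω → ℚ`, with `φ` the first
projection, already give `ℵ₀ ^ ℵ₀ = 𝔠` such idempotents. If `Ω` is finite, it has a covering
pair `a ⋖ b`; take `g x = (x, 0)` and let `φ` send `(a, q)` to `b` exactly when `q` lies above a
real cut `r > 0`. Different cuts give different maps, hence again `𝔠` of them.
-/

open Cardinal Set Function

def orderRetractionsOnto (α Ω : Type*) [Preorder α] [Preorder Ω] : Set (α → α) :=
  {f | Monotone f ∧ f ∘ f = f ∧ Nonempty (range f ≃o Ω)}

lemma comp_mem_orderRetractionsOnto {α Ω : Type*} [Preorder α] [LinearOrder Ω] {g : Ω → α}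
    {φ : α → Ω} (hg : StrictMono g) (hφ : Monotone φ) (hφg : LeftInverse φ g) :
    g ∘ φ ∈ orderRetractionsOnto α Ω := by
  refine ⟨hg.monotone.comp hφ, ?_, ?_⟩
  · ext x
    simp [hφg (φ x)]
  · rw [hφg.surjective.range_comp]
    exact ⟨(hg.orderIso g).symm⟩

section Conjugation

universe u

variable {α β : Type u} {Ω : Type*} [Preorder α] [Preorder β] [Preorder Ω]

lemma OrderIso.conj_mem_orderRetractionsOnto (e : α ≃o β) {f : α → α}
    (hf : f ∈ orderRetractionsOnto α Ω) : e ∘ f ∘ e.symm ∈ orderRetractionsOnto β Ω := by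
  obtain ⟨hmono, hidem, ⟨i⟩⟩ := hf
  refine ⟨e.monotone.comp (hmono.comp e.symm.monotone), ?_, ?_⟩
  · ext x
    simpa using congrArg e (congrFun hidem (e.symm x))
  · have hrange : range ((OrderEmbedding.subtype (· ∈ range f)).trans e.toOrderEmbedding) =
        range (e ∘ f ∘ e.symm) := by
      change range (e ∘ ((↑) : range f → α)) = _
      rw [range_comp, Subtype.range_coe, range_comp, e.symm.surjective.range_comp]
    exact ⟨((OrderIso.setCongr _ _ hrange).symm.trans OrderEmbedding.orderIso.symm).trans i⟩

lemma mk_orderRetractionsOnto_le_of_orderIso (e : α ≃o β) :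
    #(orderRetractionsOnto α Ω) ≤ #(orderRetractionsOnto β Ω) :=
  mk_le_of_injective <| Subtype.map_injective (fun _ hf ↦ e.conj_mem_orderRetractionsOnto hf)
    (e.toEquiv.arrowCongr e.toEquiv).injective

end Conjugation

namespace Prod.Lex

universe u

variable {Ω β : Type u} [LinearOrder Ω] [Preorder β]

lemma strictMono_toLex_graph (c : Ω → β) : StrictMono fun x ↦ toLex (x, c x) :=
  fun _ _ h ↦ toLex_lt_toLex.mpr (Or.inl h)

lemma mk_arrow_le_mk_orderRetractionsOnto : #(Ω → β) ≤ #(orderRetractionsOnto (Ω ×ₗ β) Ω) := by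
  refine mk_le_of_injective (f := fun c ↦ ⟨(fun x ↦ toLex (x, c x)) ∘ fun p ↦ (ofLex p).1,
    comp_mem_orderRetractionsOnto (strictMono_toLex_graph c) monotone_fst_ofLex fun _ ↦ rfl⟩) ?_
  intro c c' h
  funext x
  simpa using congrFun (congrArg Subtype.val h) (toLex (x, c x))

open Classical in
noncomputable def cutFst (a b : Ω) (U : UpperSet β) (p : Ω ×ₗ β) : Ω :=
  if (ofLex p).1 = a ∧ (ofLex p).2 ∈ U then b else (ofLex p).1

variable {a b : Ω} {U : UpperSet β}

lemma cutFst_toLex_of_notMem {z : β} (hz : z ∉ U) (x : Ω) : cutFst a b U (toLex (x, z)) = x := by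
  simp [cutFst, hz]

lemma cutFst_toLex_left (hab : a ≠ b) (q : β) : cutFst a b U (toLex (a, q)) = b ↔ q ∈ U := by
  by_cases hq : q ∈ U <;> simp [cutFst, hq, hab]

lemma monotone_cutFst (hab : a ⋖ b) : Monotone (cutFst a b U) := by
  have fst_le : ∀ p, (ofLex p).1 ≤ cutFst a b U p := fun p ↦ by
    unfold cutFst; split_ifs with hp
    exacts [hp.1 ▸ hab.le, le_rfl]
  intro p p' h
  rcases toLex_le_toLex.mp h with hlt | ⟨heq, hle⟩
  · refine le_trans ?_ (fst_le p')
    unfold cutFst; split_ifs with hp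
    exacts [hab.ge_of_gt (hp.1 ▸ hlt), hlt.le]
  · by_cases hp : (ofLex p).1 = a ∧ (ofLex p).2 ∈ U
    · have hp' : (ofLex p').1 = a ∧ (ofLex p').2 ∈ U := ⟨heq ▸ hp.1, U.upper hle hp.2⟩
      simp only [cutFst, if_pos hp, if_pos hp', le_rfl]
    · rw [cutFst, if_neg hp]
      exact heq.le.trans (fst_le p')

lemma mk_upperSet_le_mk_orderRetractionsOnto (hab : a ⋖ b) (z : β) :
    #{U : UpperSet β // z ∉ U} ≤ #(orderRetractionsOnto (Ω ×ₗ β) Ω) := by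
  refine mk_le_of_injective (f := fun U ↦ ⟨(fun x ↦ toLex (x, z)) ∘ cutFst a b U.1,
    comp_mem_orderRetractionsOnto (strictMono_toLex_graph _) (monotone_cutFst hab)
      (cutFst_toLex_of_notMem U.2)⟩) ?_
  intro U U' h
  refine Subtype.ext (SetLike.ext fun q ↦ ?_)
  have := congrArg (fun f ↦ (ofLex (f.1 (toLex (a, q)))).1) h
  simp only [comp_apply, ofLex_toLex] at this
  rw [← cutFst_toLex_left hab.ne, this, cutFst_toLex_left hab.ne]

end Prod.Lex

lemma continuum_le_mk_upperSet_rat : 𝔠 ≤ #{U : UpperSet ℚ // (0 : ℚ) ∉ U} := by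
  let cut (r : Ioi (0 : ℝ)) : {U : UpperSet ℚ // (0 : ℚ) ∉ U} :=
    ⟨⟨{q | (r : ℝ) ≤ q}, fun _ _ hq (h : (r : ℝ) ≤ _) ↦ h.trans (Rat.cast_le.mpr hq)⟩,
      fun h : (r : ℝ) ≤ ((0 : ℚ) : ℝ) ↦ (Rat.cast_zero (α := ℝ) ▸ h).not_gt r.2⟩
  have mem_cut {r : Ioi (0 : ℝ)} {q : ℚ} : q ∈ (cut r).1 ↔ (r : ℝ) ≤ q := Iff.rfl
  have cut_le {r r' : Ioi (0 : ℝ)} (h : cut r = cut r') : (r : ℝ) ≤ r' :=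
    le_of_forall_lt_rat_imp_le fun q hq ↦ by rw [← mem_cut, h, mem_cut]; exact hq.le
  rw [← mk_Ioi_real 0]
  exact mk_le_of_injective fun r r' h ↦ Subtype.ext (le_antisymm (cut_le h) (cut_le h.symm))

/-- for a countable linear order Ω with at least two elements, the
set of idempotent order-preserving maps `ℚ → ℚ` whose image is order-isomorphic
to Ω has cardinality the continuum. -/
theorem stmt_2 (Ω : Type) [LinearOrder Ω] [Countable Ω]
    (hΩ : ∃ a b : Ω, a ≠ b) :
    Cardinal.mk {f : ℚ → ℚ // Monotone f ∧ f ∘ f = f ∧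
      Nonempty (↥(Set.range f) ≃o Ω)} = Cardinal.continuum := by
  obtain ⟨a, b, hab⟩ := hΩ
  have : Nonempty Ω := ⟨a⟩
  have : Countable (Ω ×ₗ ℚ) := inferInstanceAs (Countable (Ω × ℚ))
  obtain ⟨e⟩ : Nonempty ((Ω ×ₗ ℚ) ≃o ℚ) := Order.iso_of_countable_dense _ _
  change #(orderRetractionsOnto ℚ Ω) = 𝔠
  refine ((mk_subtype_le _).trans_eq (by simp)).antisymm ?_
  refine le_trans ?_ (mk_orderRetractionsOnto_le_of_orderIso e)
  rcases finite_or_infinite Ω with hfin | hinf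
  · obtain ⟨c, hc, -⟩ := exists_covBy_le_of_lt (min_lt_max.mpr hab)
    exact continuum_le_mk_upperSet_rat.trans (Prod.Lex.mk_upperSet_le_mk_orderRetractionsOnto hc 0)
  · calc 𝔠 = #(Ω → ℚ) := by simp
      _ ≤ _ := Prod.Lex.mk_arrow_le_mk_orderRetractionsOnto
end

section
/- Let X ⊆ ℚ. There exists an idempotent order-preserving map f : ℚ → ℚ with image exactly X if and only if for every q ∈ ℚ \ X, the maximal interval of ℚ \ X containing q is not a closed subset of ℚ (in the topology on ℚ induced from the Euclidean topology on ℝ). -/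
/-- The maximal interval (order-connected component) of the complement of `X`
containing the point `q`: all `b` such that every rational between `q` and `b`
lies outside `X`. -/
def maximalInterval (X : Set ℚ) (q : ℚ) : Set ℚ :=
  {b : ℚ | ∀ c : ℚ, min q b ≤ c → c ≤ max q b → c ∉ X}

namespace MIhelp

lemma mem_symm {X : Set ℚ} {a b : ℚ} (h : b ∈ maximalInterval X a) :
    a ∈ maximalInterval X b := fun c h1 h2 =>
  h c (by rwa [min_comm] at h1) (by rwa [max_comm] at h2)

lemma self_mem {X : Set ℚ} {q : ℚ} (hq : q ∉ X) : q ∈ maximalInterval X q := by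
  intro c h1 h2
  simp only [min_self, max_self] at h1 h2
  rwa [le_antisymm h2 h1]

lemma mem_trans {X : Set ℚ} {a b d : ℚ} (hab : b ∈ maximalInterval X a)
    (hbd : d ∈ maximalInterval X b) : d ∈ maximalInterval X a := by
  intro c h1 h2
  rcases le_total c b with hcb | hbc
  · rcases min_le_iff.mp h1 with h | h
    · exact hab c ((min_le_left a b).trans h) (hcb.trans (le_max_right a b))
    · exact hbd c ((min_le_right b d).trans h) (hcb.trans (le_max_left b d))
  · rcases le_max_iff.mp h2 with h | h
    · exact hab c ((min_le_right a b).trans hbc) (h.trans (le_max_left a b))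
    · exact hbd c ((min_le_left b d).trans hbc) (h.trans (le_max_right b d))

lemma eq_of_mem {X : Set ℚ} {a b : ℚ} (h : b ∈ maximalInterval X a) :
    maximalInterval X b = maximalInterval X a := by
  ext d
  exact ⟨fun hd => mem_trans h hd, fun hd => mem_trans (mem_symm h) hd⟩

lemma exists_endpoint {X : Set ℚ} {q : ℚ} (hq : q ∉ X)
    (hnc : ¬ IsClosed (maximalInterval X q)) :
    ∃ p, p ∈ X ∧ ∀ q' ∈ maximalInterval X q, ∀ c,
      min q' p ≤ c → c ≤ max q' p → c ≠ p → c ∉ X := by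
  obtain ⟨p, hpcl, hpI⟩ : ∃ p, p ∈ closure (maximalInterval X q) ∧ p ∉ maximalInterval X q := by
    by_contra h
    push_neg at h
    exact hnc (isClosed_of_closure_subset h)
  have hqI : q ∈ maximalInterval X q := self_mem hq
  have hpq : p ≠ q := fun h => hpI (h ▸ hqI)
  rcases hpq.lt_or_gt with hlt | hlt
  · -- p < q : p lies below the interval
    have hA : ∀ b ∈ maximalInterval X q, p < b := by
      intro b hb
      by_contra hle
      push_neg at hle
      apply hpI
      intro c h1 h2
      refine hb c ?_ ?_
      · calc min q b ≤ b := min_le_right _ _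
          _ ≤ p := hle
          _ ≤ c := by rwa [min_eq_right hlt.le] at h1
      · calc c ≤ q := by rwa [max_eq_left hlt.le] at h2
          _ ≤ max q b := le_max_left _ _
    have hB : ∀ c, p < c → c ≤ q → c ∉ X := by
      intro c hc1 hc2
      obtain ⟨b, hb1, hb2⟩ := (mem_closure_iff.mp hpcl) (Set.Iio c) isOpen_Iio hc1
      refine hb2 c ?_ ?_
      · exact (min_le_right q b).trans (le_of_lt hb1)
      · exact hc2.trans (le_max_left _ _)
    have hpX : p ∈ X := by
      by_contra hpX
      apply hpI
      intro c h1 h2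
      rw [min_eq_right hlt.le] at h1
      rw [max_eq_left hlt.le] at h2
      rcases eq_or_lt_of_le h1 with h | h
      · rwa [← h]
      · exact hB c h h2
    refine ⟨p, hpX, ?_⟩
    intro q' hq' c h1 h2 hcp
    have hpq' : p < q' := hA q' hq'
    rw [min_eq_right hpq'.le] at h1
    rw [max_eq_left hpq'.le] at h2
    have hc : p < c := lt_of_le_of_ne h1 (Ne.symm hcp)
    rcases le_total c q with hcq | hqc
    · exact hB c hc hcq
    · exact hq' c ((min_le_left q q').trans hqc) (h2.trans (le_max_right q q'))
  · -- q < p : p lies above the interval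
    have hA : ∀ b ∈ maximalInterval X q, b < p := by
      intro b hb
      by_contra hle
      push_neg at hle
      apply hpI
      intro c h1 h2
      refine hb c ?_ ?_
      · calc min q b ≤ q := min_le_left _ _
          _ ≤ c := by rwa [min_eq_left hlt.le] at h1
      · calc c ≤ p := by rwa [max_eq_right hlt.le] at h2
          _ ≤ b := hle
          _ ≤ max q b := le_max_right _ _
    have hB : ∀ c, q ≤ c → c < p → c ∉ X := by
      intro c hc1 hc2
      obtain ⟨b, hb1, hb2⟩ := (mem_closure_iff.mp hpcl) (Set.Ioi c) isOpen_Ioi hc2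
      refine hb2 c ?_ ?_
      · exact (min_le_left q b).trans hc1
      · exact (le_of_lt hb1).trans (le_max_right q b)
    have hpX : p ∈ X := by
      by_contra hpX
      apply hpI
      intro c h1 h2
      rw [min_eq_left hlt.le] at h1
      rw [max_eq_right hlt.le] at h2
      rcases eq_or_lt_of_le h2 with h | h
      · rwa [h]
      · exact hB c h1 h
    refine ⟨p, hpX, ?_⟩
    intro q' hq' c h1 h2 hcp
    have hpq' : q' < p := hA q' hq'
    rw [min_eq_left hpq'.le] at h1
    rw [max_eq_right hpq'.le] at h2
    have hc : c < p := lt_of_le_of_ne h2 hcp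
    rcases le_total q c with hqc | hcq
    · exact hB c hqc hc
    · exact hq' c ((min_le_right q q').trans h1) (hcq.trans (le_max_left q q'))

end MIhelp

/-- a subset `X ⊆ ℚ` is the image of an idempotent order-preserving
map `ℚ → ℚ` iff for every `q ∉ X` the maximal interval of `ℚ \ X` containing `q`
is not closed in the topology of `ℚ`. -/
theorem stmt_3 (X : Set ℚ) :
    (∃ f : ℚ → ℚ, Monotone f ∧ f ∘ f = f ∧ Set.range f = X) ↔
      ∀ q : ℚ, q ∉ X → ¬ IsClosed (maximalInterval X q) := by
  constructor
  · rintro ⟨f, hmono, hff, hrange⟩ q hqX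
    have hfix : ∀ x ∈ X, f x = x := by
      intro x hx
      rw [← hrange] at hx
      obtain ⟨a, rfl⟩ := hx
      exact congrFun hff a
    have hfqX : f q ∈ X := hrange ▸ Set.mem_range_self q
    have hne : f q ≠ q := fun h => hqX (h ▸ hfqX)
    intro hcl
    have hnotI : f q ∉ maximalInterval X q := fun h =>
      h (f q) (min_le_right _ _) (le_max_right _ _) hfqX
    rcases hne.lt_or_gt with hlt | hlt
    · -- f q < q
      have hsub : Set.Ioc (f q) q ⊆ maximalInterval X q := by
        intro c hc c' h1 h2 hX
        rw [min_eq_right hc.2] at h1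
        rw [max_eq_left hc.2] at h2
        have hfc : f c' = c' := hfix c' hX
        have h3 : f c' ≤ f q := hmono h2
        rw [hfc] at h3
        exact lt_irrefl c' (h3.trans_lt (hc.1.trans_le h1))
      have hclosure : f q ∈ closure (maximalInterval X q) :=
        closure_mono hsub (by rw [closure_Ioc hne]; exact ⟨le_refl _, hlt.le⟩)
      exact hnotI (hcl.closure_subset hclosure)
    · -- q < f q
      have hsub : Set.Ico q (f q) ⊆ maximalInterval X q := by
        intro c hc c' h1 h2 hX
        rw [min_eq_left hc.1] at h1
        rw [max_eq_right hc.1] at h2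
        have hfc : f c' = c' := hfix c' hX
        have h3 : f q ≤ f c' := hmono h1
        rw [hfc] at h3
        exact lt_irrefl c' ((h2.trans_lt hc.2).trans_le h3)
      have hclosure : f q ∈ closure (maximalInterval X q) :=
        closure_mono hsub (by rw [closure_Ico hne.symm]; exact ⟨hlt.le, le_refl _⟩)
      exact hnotI (hcl.closure_subset hclosure)
  · intro H
    have hsel : ∀ S : Set ℚ, ∃ p : ℚ, ∀ q, q ∉ X → S = maximalInterval X q →
        p ∈ X ∧ ∀ q' ∈ S, ∀ c, min q' p ≤ c → c ≤ max q' p → c ≠ p → c ∉ X := by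
      intro S
      by_cases h : ∃ q, q ∉ X ∧ S = maximalInterval X q
      · obtain ⟨q, hq, rfl⟩ := h
        obtain ⟨p, hp1, hp2⟩ := MIhelp.exists_endpoint hq (H q hq)
        exact ⟨p, fun _ _ _ => ⟨hp1, hp2⟩⟩
      · exact ⟨0, fun q hq hS => absurd ⟨q, hq, hS⟩ h⟩
    choose sel hsel using hsel
    classical
    obtain ⟨f, F0, F1, F2, F3⟩ :
        ∃ f : ℚ → ℚ, (∀ q ∈ X, f q = q) ∧ (∀ q, f q ∈ X) ∧
          (∀ q c, min q (f q) ≤ c → c ≤ max q (f q) → c ≠ f q → c ∉ X) ∧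
          (∀ x y, x ∉ X → y ∉ X → y ∈ maximalInterval X x → f x = f y) := by
      refine ⟨fun q => if q ∈ X then q else sel (maximalInterval X q), ?_, ?_, ?_, ?_⟩
      · intro q hq
        simp only [if_pos hq]
      · intro q
        by_cases hq : q ∈ X
        · simpa only [if_pos hq] using hq
        · simpa only [if_neg hq] using (hsel (maximalInterval X q) q hq rfl).1
      · intro q c h1 h2 hne
        by_cases hq : q ∈ X
        · simp only [if_pos hq, min_self, max_self] at h1 h2 hne
          exact absurd (le_antisymm h2 h1) hne
        · simp only [if_neg hq] at h1 h2 hne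
          exact (hsel (maximalInterval X q) q hq rfl).2 q (MIhelp.self_mem hq) c h1 h2 hne
      · intro x y hx hy hmem
        simp only [if_neg hx, if_neg hy, MIhelp.eq_of_mem hmem]
    have hmono : Monotone f := by
      intro x y hxy
      by_contra hlt
      push_neg at hlt
      rcases le_or_gt x (f y) with hxb | hbx
      · exact F2 x (f y) ((min_le_left _ _).trans hxb)
          (hlt.le.trans (le_max_right _ _)) hlt.ne (F1 y)
      · rcases le_or_gt (f x) y with hay | hya
        · exact F2 y (f x) ((min_le_right _ _).trans hlt.le)
            (hay.trans (le_max_left _ _)) hlt.ne' (F1 x)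
        · -- f y < x ≤ y < f x
          have hxX : x ∉ X :=
            F2 x x (min_le_left _ _) (le_max_left _ _) (hxy.trans_lt hya).ne
          have hyX : y ∉ X :=
            F2 y y (min_le_left _ _) (le_max_left _ _) (hbx.trans_le hxy).ne'
          have hyMI : y ∈ maximalInterval X x := by
            intro c h1 h2
            rw [min_eq_left hxy] at h1
            rw [max_eq_right hxy] at h2
            exact F2 x c ((min_le_left _ _).trans h1)
              ((h2.trans hya.le).trans (le_max_right _ _)) (h2.trans_lt hya).ne
          rw [F3 x y hxX hyX hyMI] at hlt
          exact lt_irrefl _ hlt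
    refine ⟨f, hmono, ?_, ?_⟩
    · funext q
      exact F0 (f q) (F1 q)
    · apply Set.Subset.antisymm
      · rintro _ ⟨q, rfl⟩
        exact F1 q
      · intro x hx
        exact ⟨x, F0 x hx⟩
end

section
/- Let e₁, e₂ : ℕ → ℚ be bijections. Then the linearly ordered sets C_{e₁} and C_{e₂} are order-isomorphic if and only if the bijection e₂ ∘ e₁⁻¹ : ℚ → ℚ is an order-automorphism of ℚ (equivalently, is strictly increasing). Moreover, any order-isomorphism φ : C_{e₁} → C_{e₂} satisfies φ(n, i) = (n, i) for all n ∈ ℕ and 0 ≤ i ≤ n. -/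
/-- The underlying set of `C_e`: pairs `(n, i)` with `i ≤ n`. -/
def CElt : Type := {p : ℕ × ℕ // p.2 ≤ p.1}

/-- The linear order on `C_e` determined by an enumeration `e : ℕ → ℚ`:
`(m, i) ≤ (n, j)` iff `e m < e n`, or `m = n` and `i ≤ j`. -/
def Cle (e : ℕ → ℚ) (p q : CElt) : Prop :=
  e p.val.1 < e q.val.1 ∨ (p.val.1 = q.val.1 ∧ p.val.2 ≤ q.val.2)

/-!
Since `e` is onto the dense order `ℚ`, two elements of `C_e` in different blocks `{n} × [0, n]`
always have a third one strictly between them, so the covering pairs of `C_e` are exactly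
`(n, i) ⋖ (n, i + 1)`. An order isomorphism preserves coverings; hence it sends `(n, 0)`, which
covers nothing, to some `(m, 0)`, then `(n, i)` to `(m, i)` step by step, and since `(n, n)` is
covered by nothing, neither is `(m, n)`, forcing `m = n`. So every isomorphism is the identity,
which happens exactly when `e₁` and `e₂` induce the same order on `ℕ`.
-/

open Function

theorem CElt.ext {x y : CElt} (h₁ : x.val.1 = y.val.1) (h₂ : x.val.2 = y.val.2) : x = y :=
  Subtype.ext (Prod.ext h₁ h₂)

def CElt.mk (n i : ℕ) (h : i ≤ n) : CElt := ⟨(n, i), h⟩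

@[simp]
theorem CElt.val_mk (n i : ℕ) (h : i ≤ n) : (CElt.mk n i h).val = (n, i) := rfl

def RelCovBy {α : Type*} (r : α → α → Prop) (x y : α) : Prop :=
  r x y ∧ x ≠ y ∧ ∀ z, r x z → r z y → z = x ∨ z = y

namespace RelIso

variable {α β : Type*} {r : α → α → Prop} {s : β → β → Prop} (φ : r ≃r s)

theorem relCovBy_apply_iff {x y : α} : RelCovBy s (φ x) (φ y) ↔ RelCovBy r x y := by
  simp only [RelCovBy, φ.map_rel_iff, φ.injective.ne_iff, φ.surjective.forall,
    φ.injective.eq_iff]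

theorem exists_relCovBy_apply_left_iff {y : α} :
    (∃ x, RelCovBy s x (φ y)) ↔ ∃ x, RelCovBy r x y := by
  simp only [φ.surjective.exists, φ.relCovBy_apply_iff]

theorem exists_relCovBy_apply_right_iff {x : α} :
    (∃ y, RelCovBy s (φ x) y) ↔ ∃ y, RelCovBy r x y := by
  simp only [φ.surjective.exists, φ.relCovBy_apply_iff]

end RelIso

theorem strictMono_comp_invFun_iff {α β γ : Type*} [Nonempty α] [LinearOrder β] [LinearOrder γ]
    {e₁ : α → β} {e₂ : α → γ} (h₁ : Bijective e₁) :
    StrictMono (e₂ ∘ invFun e₁) ↔ ∀ a b, e₁ a < e₁ b ↔ e₂ a < e₂ b := by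
  have hcomp (a : α) : (e₂ ∘ invFun e₁) (e₁ a) = e₂ a := congrArg e₂ (leftInverse_invFun h₁.1 a)
  refine ⟨fun hmono a b ↦ ?_, fun h ↦ h₁.2.forall₂.2 fun a b ↦ ?_⟩
  · simpa only [hcomp] using (hmono.lt_iff_lt (a := e₁ a) (b := e₁ b)).symm
  · simpa only [hcomp] using (h a b).1

namespace Cle

variable {e : ℕ → ℚ}

theorem fst_eq_of_relCovBy (he : Surjective e) {x y : CElt} (h : RelCovBy (Cle e) x y) :
    x.val.1 = y.val.1 := by
  obtain ⟨hxy | ⟨hfst, -⟩, hne, hbetween⟩ := h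
  · exfalso
    obtain ⟨q, hxq, hqy⟩ := exists_between hxy
    obtain ⟨k, rfl⟩ := he q
    rcases hbetween (CElt.mk k 0 k.zero_le) (.inl hxq) (.inl hqy) with rfl | rfl
    · exact hxq.false
    · exact hqy.false
  · exact hfst

theorem relCovBy_iff (he : Surjective e) {x y : CElt} :
    RelCovBy (Cle e) x y ↔ x.val.1 = y.val.1 ∧ y.val.2 = x.val.2 + 1 := by
  constructor
  · intro h
    have hfst := fst_eq_of_relCovBy he h
    obtain ⟨hle, hne, hbetween⟩ := h
    have hlt : x.val.2 < y.val.2 := by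
      rcases hle with hle | ⟨-, hle⟩
      · exact absurd hle (by rw [hfst]; exact lt_irrefl _)
      · exact hle.lt_of_ne fun h ↦ hne (CElt.ext hfst h)
    refine ⟨hfst, le_antisymm ?_ hlt⟩
    by_contra! hgap
    have hy := y.property
    rcases hbetween (CElt.mk x.val.1 (x.val.2 + 1) (by omega)) (.inr ⟨rfl, x.val.2.le_succ⟩)
      (.inr ⟨hfst, hgap.le⟩) with h | h
    all_goals
      have := congrArg (fun z : CElt ↦ z.val.2) h
      simp only [CElt.val_mk] at this
      omega
  · rintro ⟨hfst, hsnd⟩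
    refine ⟨.inr ⟨hfst, by omega⟩, fun h ↦ by subst h; omega, ?_⟩
    rintro z (hxz | ⟨hxz, hxz'⟩) (hzy | ⟨hzy, hzy'⟩)
    · rw [hfst] at hxz; exact absurd (hxz.trans hzy) (lt_irrefl _)
    · rw [hfst, hzy] at hxz; exact absurd hxz (lt_irrefl _)
    · rw [← hxz, hfst] at hzy; exact absurd hzy (lt_irrefl _)
    · rcases Nat.le_and_le_add_one_iff.mp ⟨hxz', hsnd ▸ hzy'⟩ with h | h
      · exact .inl (CElt.ext hxz.symm h)
      · exact .inr (CElt.ext hzy (by omega))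

theorem exists_relCovBy_left_iff (he : Surjective e) {y : CElt} :
    (∃ x, RelCovBy (Cle e) x y) ↔ y.val.2 ≠ 0 := by
  simp only [relCovBy_iff he]
  refine ⟨fun ⟨x, _, hsnd⟩ ↦ by omega, fun h ↦ ?_⟩
  have := y.property
  exact ⟨CElt.mk y.val.1 (y.val.2 - 1) (by omega), rfl, by simp only [CElt.val_mk]; omega⟩

theorem exists_relCovBy_right_iff (he : Surjective e) {x : CElt} :
    (∃ y, RelCovBy (Cle e) x y) ↔ x.val.2 < x.val.1 := by
  simp only [relCovBy_iff he]
  refine ⟨fun ⟨y, hfst, hsnd⟩ ↦ ?_, fun h ↦ ⟨CElt.mk x.val.1 (x.val.2 + 1) h, rfl, rfl⟩⟩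
  have := y.property
  omega

theorem relIso_apply_eq_self {e₁ e₂ : ℕ → ℚ} (h₁ : Surjective e₁) (h₂ : Surjective e₂)
    (φ : Cle e₁ ≃r Cle e₂) (p : CElt) : φ p = p := by
  obtain ⟨⟨n, i⟩, hi⟩ := p
  change φ (CElt.mk n i hi) = CElt.mk n i hi
  set m := (φ (CElt.mk n 0 n.zero_le)).val.1
  have hblock (i : ℕ) (hi : i ≤ n) : (φ (CElt.mk n i hi)).val = (m, i) := by
    induction i with
    | zero =>
      have hbot : ¬∃ x, RelCovBy (Cle e₁) x (CElt.mk n 0 hi) := by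
        rw [exists_relCovBy_left_iff h₁, not_not]; rfl
      rw [← φ.exists_relCovBy_apply_left_iff, exists_relCovBy_left_iff h₂, not_not] at hbot
      exact Prod.ext rfl hbot
    | succ i ih =>
      have hcov : RelCovBy (Cle e₁) (CElt.mk n i (by omega)) (CElt.mk n (i + 1) hi) :=
        (relCovBy_iff h₁).2 ⟨rfl, rfl⟩
      rw [← φ.relCovBy_apply_iff, relCovBy_iff h₂, ih] at hcov
      exact Prod.ext hcov.1.symm hcov.2
  have hmn : m = n := by
    have htop : ¬∃ y, RelCovBy (Cle e₁) (CElt.mk n n le_rfl) y := by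
      rw [exists_relCovBy_right_iff h₁]; exact lt_irrefl n
    rw [← φ.exists_relCovBy_apply_right_iff, exists_relCovBy_right_iff h₂, hblock n le_rfl] at htop
    have hle := (φ (CElt.mk n n le_rfl)).property
    rw [hblock n le_rfl] at hle
    exact ((not_lt.1 htop).antisymm' hle).symm
  exact Subtype.ext (by rw [hblock i hi, hmn, CElt.val_mk])

theorem eq_iff {e₁ e₂ : ℕ → ℚ} : Cle e₁ = Cle e₂ ↔ ∀ a b, e₁ a < e₁ b ↔ e₂ a < e₂ b := by
  refine ⟨fun h a b ↦ ?_, fun h ↦ funext₂ fun x y ↦ by simp only [Cle, h]⟩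
  have hab := congrFun₂ h ⟨(a, 0), a.zero_le⟩ ⟨(b, 0), b.zero_le⟩
  simp only [Cle, le_refl, and_true, eq_iff_iff] at hab
  rcases eq_or_ne a b with rfl | hne
  · simp only [lt_irrefl]
  · simpa only [hne, or_false] using hab

end Cle

/-- `C_{e₁}` and `C_{e₂}` are order-isomorphic iff `e₂ ∘ e₁⁻¹` is
strictly increasing; moreover any order-isomorphism fixes every pair `(n, i)`. -/
theorem stmt_5 (e₁ e₂ : ℕ → ℚ) (h₁ : Function.Bijective e₁)
    (h₂ : Function.Bijective e₂) :
    (Nonempty (Cle e₁ ≃r Cle e₂) ↔ StrictMono (e₂ ∘ Function.invFun e₁)) ∧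
    (∀ φ : Cle e₁ ≃r Cle e₂, ∀ p : CElt, (φ p).val = p.val) := by
  have hfix (φ : Cle e₁ ≃r Cle e₂) (p : CElt) : φ p = p := Cle.relIso_apply_eq_self h₁.2 h₂.2 φ p
  refine ⟨?_, fun φ p ↦ congrArg Subtype.val (hfix φ p)⟩
  rw [strictMono_comp_invFun_iff h₁, ← Cle.eq_iff]
  refine ⟨fun ⟨φ⟩ ↦ funext₂ fun x y ↦ propext ?_, fun h ↦ ⟨h ▸ RelIso.refl _⟩⟩
  rw [← φ.map_rel_iff, hfix φ x, hfix φ y]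
end

section
/- For every bijection e : ℕ → ℚ, the only order-automorphism of the linearly ordered set C_e is the identity; that is, Aut(C_e) is trivial. -/
/-- Strict version of `Cle`. -/
def Clt (e : ℕ → ℚ) (p q : CElt) : Prop :=
  e p.val.1 < e q.val.1 ∨ (p.val.1 = q.val.1 ∧ p.val.2 < q.val.2)

lemma clt_iff (e : ℕ → ℚ) (he : Function.Injective e) (p q : CElt) :
    Clt e p q ↔ Cle e p q ∧ ¬ Cle e q p := by
  unfold Clt Cle
  constructor
  · rintro (h | ⟨h1, h2⟩)
    · refine ⟨Or.inl h, ?_⟩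
      rintro (h' | ⟨h1', h2'⟩)
      · linarith
      · rw [h1'] at h; exact lt_irrefl _ h
    · refine ⟨Or.inr ⟨h1, le_of_lt h2⟩, ?_⟩
      rintro (h' | ⟨h1', h2'⟩)
      · rw [h1] at h'; exact lt_irrefl _ h'
      · omega
  · rintro ⟨h | ⟨h1, h2⟩, hn⟩
    · exact Or.inl h
    · refine Or.inr ⟨h1, lt_of_le_of_ne h2 fun hq => ?_⟩
      exact hn (Or.inr ⟨h1.symm, le_of_eq hq.symm⟩)

lemma map_clt (e : ℕ → ℚ) (he : Function.Injective e) (ψ : Cle e ≃r Cle e)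
    (p q : CElt) : Clt e (ψ p) (ψ q) ↔ Clt e p q := by
  rw [clt_iff e he, clt_iff e he, ψ.map_rel_iff, ψ.map_rel_iff]

/-- Adjacency (covering) in `C_e`. -/
def Adj (e : ℕ → ℚ) (p q : CElt) : Prop :=
  Clt e p q ∧ ∀ r, ¬ (Clt e p r ∧ Clt e r q)

lemma adj_iff (e : ℕ → ℚ) (he : Function.Bijective e) (p q : CElt) :
    Adj e p q ↔ p.val.1 = q.val.1 ∧ q.val.2 = p.val.2 + 1 := by
  constructor
  · rintro ⟨hlt, hmid⟩
    have h1 : p.val.1 = q.val.1 := by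
      by_contra hne
      have hq : e p.val.1 < e q.val.1 := by
        rcases hlt with h | ⟨h, _⟩
        · exact h
        · exact absurd h hne
      obtain ⟨x, hx1, hx2⟩ := exists_between hq
      obtain ⟨k, rfl⟩ := he.2 x
      exact hmid ⟨(k, 0), Nat.zero_le k⟩ ⟨Or.inl hx1, Or.inl hx2⟩
    have h2 : p.val.2 < q.val.2 := by
      rcases hlt with h | ⟨_, h⟩
      · rw [h1] at h; exact absurd h (lt_irrefl _)
      · exact h
    refine ⟨h1, ?_⟩
    by_contra hne
    have hmem : p.val.2 + 1 ≤ p.val.1 := by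
      have := q.property; omega
    exact hmid ⟨(p.val.1, p.val.2 + 1), hmem⟩
      ⟨Or.inr ⟨rfl, Nat.lt_succ_self _⟩,
       Or.inr ⟨h1, show p.val.2 + 1 < q.val.2 by omega⟩⟩
  · rintro ⟨h1, h2⟩
    refine ⟨Or.inr ⟨h1, by omega⟩, ?_⟩
    rintro r ⟨hpr | ⟨hpr1, hpr2⟩, hrq | ⟨hrq1, hrq2⟩⟩
    · rw [h1] at hpr; linarith
    · rw [h1, ← hrq1] at hpr; exact lt_irrefl _ hpr
    · rw [← hpr1, h1] at hrq; exact lt_irrefl _ hrq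
    · omega

lemma map_adj (e : ℕ → ℚ) (he : Function.Bijective e) (ψ : Cle e ≃r Cle e)
    (p q : CElt) (h : Adj e p q) : Adj e (ψ p) (ψ q) := by
  obtain ⟨hlt, hmid⟩ := h
  refine ⟨(map_clt e he.1 ψ p q).2 hlt, fun r ⟨h1, h2⟩ => ?_⟩
  obtain ⟨s, rfl⟩ := ψ.surjective r
  exact hmid s ⟨(map_clt e he.1 ψ p s).1 h1, (map_clt e he.1 ψ s q).1 h2⟩

/-- Along a block, any automorphism acts as a shift. -/
lemma blocks (e : ℕ → ℚ) (he : Function.Bijective e) (ψ : Cle e ≃r Cle e)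
    (n : ℕ) : ∀ i (h : i ≤ n),
    (ψ ⟨(n, i), h⟩).val.1 = (ψ ⟨(n, 0), Nat.zero_le n⟩).val.1 ∧
    (ψ ⟨(n, i), h⟩).val.2 = (ψ ⟨(n, 0), Nat.zero_le n⟩).val.2 + i := by
  intro i
  induction i with
  | zero => exact fun h => ⟨rfl, rfl⟩
  | succ i ih =>
    intro h
    have hi : i ≤ n := Nat.le_of_succ_le h
    obtain ⟨ih1, ih2⟩ := ih hi
    have hadj : Adj e ⟨(n, i), hi⟩ ⟨(n, i + 1), h⟩ :=
      (adj_iff e he _ _).2 ⟨rfl, rfl⟩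
    have := (adj_iff e he _ _).1 (map_adj e he ψ _ _ hadj)
    exact ⟨this.1 ▸ ih1, by omega⟩

/-- for any enumeration `e` of ℚ, the only order-automorphism of
`C_e` is the identity. -/
theorem stmt_6 (e : ℕ → ℚ) (he : Function.Bijective e)
    (φ : Cle e ≃r Cle e) : φ = RelIso.refl (Cle e) := by
  have key : ∀ x : CElt, φ x = x := by
    rintro ⟨⟨n, i⟩, h⟩
    set m := (φ ⟨(n, 0), Nat.zero_le n⟩).val.1 with hm
    set j₀ := (φ ⟨(n, 0), Nat.zero_le n⟩).val.2 with hj₀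
    have hj₀m : j₀ ≤ m := (φ ⟨(n, 0), Nat.zero_le n⟩).property
    -- φ (n, 0) = (m, j₀)
    have hphi0 : φ ⟨(n, 0), Nat.zero_le n⟩ = ⟨(m, j₀), hj₀m⟩ := by
      apply Subtype.ext
      exact Prod.ext hm.symm hj₀.symm
    -- symm block data
    set a := (φ.symm ⟨(m, 0), Nat.zero_le m⟩).val.1 with ha
    set b := (φ.symm ⟨(m, 0), Nat.zero_le m⟩).val.2 with hb
    have hsymm := blocks e he φ.symm m
    have h0 : φ.symm ⟨(m, j₀), hj₀m⟩ = ⟨(n, 0), Nat.zero_le n⟩ := by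
      rw [← hphi0]; exact φ.symm_apply_apply _
    obtain ⟨hs1, hs2⟩ := hsymm j₀ hj₀m
    rw [h0] at hs1 hs2
    have hs1' : n = a := hs1
    have hs2' : 0 = b + j₀ := hs2
    have hbz : b = 0 := by omega
    have hj0z : j₀ = 0 := by omega
    -- m ≤ n from symm at (m, m)
    obtain ⟨ht1, ht2⟩ := hsymm m (le_refl m)
    have hmn : m ≤ n := by
      have hpr : (φ.symm ⟨(m, m), le_refl m⟩).val.2 ≤
          (φ.symm ⟨(m, m), le_refl m⟩).val.1 :=
        (φ.symm ⟨(m, m), le_refl m⟩).property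
      omega
    -- n ≤ m from φ at (n, n)
    obtain ⟨hu1, hu2⟩ := blocks e he φ n n (le_refl n)
    have hnm : n ≤ m := by
      have hpr : (φ ⟨(n, n), le_refl n⟩).val.2 ≤
          (φ ⟨(n, n), le_refl n⟩).val.1 :=
        (φ ⟨(n, n), le_refl n⟩).property
      omega
    have hmneq : m = n := le_antisymm hmn hnm
    obtain ⟨hv1, hv2⟩ := blocks e he φ n i h
    apply Subtype.ext
    apply Prod.ext
    · show (φ ⟨(n, i), h⟩).val.1 = n
      omega
    · show (φ ⟨(n, i), h⟩).val.2 = i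
      omega
  apply RelIso.ext key
end

section
/- Let Ω be any linearly ordered set and e : ℕ → ℚ a bijection. Then the group of order-automorphisms of the ordered sum Ω + C_e is isomorphic to the group of order-automorphisms of Ω. -/
/-- The order on the ordered sum `Ω + C_e`: every point of Ω lies below every
point of `C_e`. -/
def SumLe (Ω : Type) [LinearOrder Ω] (e : ℕ → ℚ) : Ω ⊕ CElt → Ω ⊕ CElt → Prop :=
  Sum.Lex (· ≤ ·) (Cle e)

namespace Stmt8

/-- make an element of `CElt` -/
def cmk (n i : ℕ) (h : i ≤ n) : CElt := ⟨(n, i), h⟩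

@[simp] lemma cmk_fst {n i : ℕ} {h : i ≤ n} : (cmk n i h).val.1 = n := rfl
@[simp] lemma cmk_snd {n i : ℕ} {h : i ≤ n} : (cmk n i h).val.2 = i := rfl

variable {Ω : Type} [LinearOrder Ω] {e : ℕ → ℚ}

lemma r_inl_inl {a b : Ω} : SumLe Ω e (.inl a) (.inl b) ↔ a ≤ b := by
  simp [SumLe]

lemma r_inl_inr (a : Ω) (c : CElt) : SumLe Ω e (.inl a) (.inr c) := Sum.Lex.sep a c

lemma r_inr_inl {a : Ω} {c : CElt} : ¬ SumLe Ω e (.inr c) (.inl a) := Sum.lex_inr_inl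

lemma r_inr_inr {c d : CElt} : SumLe Ω e (.inr c) (.inr d) ↔ Cle e c d := by
  simp [SumLe]

lemma r_antisymm (he : Function.Injective e) {x y : Ω ⊕ CElt}
    (h1 : SumLe Ω e x y) (h2 : SumLe Ω e y x) : x = y := by
  cases x with
  | inl a =>
    cases y with
    | inl b =>
      exact congrArg _ (le_antisymm (r_inl_inl.1 h1) (r_inl_inl.1 h2))
    | inr c => exact absurd h2 r_inr_inl
  | inr c =>
    cases y with
    | inl b => exact absurd h1 r_inr_inl
    | inr d =>
      have h1' := r_inr_inr.1 h1
      have h2' := r_inr_inr.1 h2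
      rcases h1' with h1' | ⟨hn, hi⟩
      · rcases h2' with h2' | ⟨hn, hi⟩
        · exact absurd (h1'.trans h2') (lt_irrefl _)
        · rw [hn] at h1'; exact absurd h1' (lt_irrefl _)
      · rcases h2' with h2' | ⟨hn', hi'⟩
        · rw [hn] at h2'; exact absurd h2' (lt_irrefl _)
        · exact congrArg _ (Subtype.ext (Prod.ext hn (le_antisymm hi hi')))

/-- strict order associated to `SumLe`. -/
def Slt (Ω : Type) [LinearOrder Ω] (e : ℕ → ℚ) (x y : Ω ⊕ CElt) : Prop :=
  ¬ SumLe Ω e y x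

lemma slt_inl_inr (a : Ω) (c : CElt) : Slt Ω e (.inl a) (.inr c) := r_inr_inl

lemma not_slt_inr_inl {a : Ω} {c : CElt} : ¬ Slt Ω e (.inr c) (.inl a) :=
  fun h => h (r_inl_inr a c)

lemma slt_inr_inr (he : Function.Injective e) {c d : CElt} :
    Slt Ω e (.inr c) (.inr d) ↔
      e c.val.1 < e d.val.1 ∨ (c.val.1 = d.val.1 ∧ c.val.2 < d.val.2) := by
  unfold Slt
  rw [r_inr_inr]
  unfold Cle
  constructor
  · intro h
    rcases lt_trichotomy (e c.val.1) (e d.val.1) with ht | ht | ht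
    · exact Or.inl ht
    · have hn : c.val.1 = d.val.1 := he ht
      refine Or.inr ⟨hn, ?_⟩
      by_contra hle
      exact h (Or.inr ⟨hn.symm, by omega⟩)
    · exact absurd (Or.inl ht) h
  · rintro (h | ⟨hn, hi⟩) hcon
    · rcases hcon with h' | ⟨hn', -⟩
      · exact absurd (h.trans h') (lt_irrefl _)
      · rw [hn'] at h; exact absurd h (lt_irrefl _)
    · rcases hcon with h' | ⟨-, hi'⟩
      · rw [hn] at h'; exact absurd h' (lt_irrefl _)
      · omega

/-- covering relation: `y` is an immediate successor of `x`. -/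
def Cov (Ω : Type) [LinearOrder Ω] (e : ℕ → ℚ) (x y : Ω ⊕ CElt) : Prop :=
  Slt Ω e x y ∧ ∀ z, Slt Ω e x z → Slt Ω e z y → False

/-- between two points of distinct columns there is always another point. -/
lemma exists_between_cols (he : Function.Bijective e) {c d : CElt}
    (h : e c.val.1 < e d.val.1) :
    ∃ z, Slt Ω e (.inr c) z ∧ Slt Ω e z (.inr d) := by
  obtain ⟨q, hq1, hq2⟩ := exists_between h
  obtain ⟨m, hm⟩ := he.2 q
  refine ⟨.inr (cmk m 0 (Nat.zero_le m)), ?_, ?_⟩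
  · rw [slt_inr_inr he.1]; exact Or.inl (by simpa [hm] using hq1)
  · rw [slt_inr_inr he.1]; exact Or.inl (by simpa [hm] using hq2)

lemma not_cov_inl_inr (he : Function.Bijective e) (a : Ω) (c : CElt) :
    ¬ Cov Ω e (.inl a) (.inr c) := by
  rintro ⟨-, h2⟩
  obtain ⟨q, hq⟩ := exists_lt (e c.val.1)
  obtain ⟨m, hm⟩ := he.2 q
  refine h2 (.inr (cmk m 0 (Nat.zero_le m))) (slt_inl_inr _ _) ?_
  rw [slt_inr_inr he.1]; exact Or.inl (by simpa [hm] using hq)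

lemma not_cov_inr_inl (a : Ω) (c : CElt) : ¬ Cov Ω e (.inr c) (.inl a) := by
  rintro ⟨h1, -⟩; exact not_slt_inr_inl h1

lemma cov_inr_inr_iff (he : Function.Bijective e) {c d : CElt} :
    Cov Ω e (.inr c) (.inr d) ↔ c.val.1 = d.val.1 ∧ d.val.2 = c.val.2 + 1 := by
  constructor
  · rintro ⟨h1, h2⟩
    rw [slt_inr_inr he.1] at h1
    rcases h1 with h1 | ⟨hn, hi⟩
    · obtain ⟨z, hz1, hz2⟩ := exists_between_cols (Ω := Ω) he h1
      exact (h2 z hz1 hz2).elim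
    · refine ⟨hn, ?_⟩
      by_contra hne
      have hlt : c.val.2 + 1 < d.val.2 := by omega
      have hle : c.val.2 + 1 ≤ c.val.1 := by
        have := d.property; omega
      refine h2 (.inr (cmk c.val.1 (c.val.2 + 1) hle)) ?_ ?_
      · rw [slt_inr_inr he.1]; exact Or.inr ⟨rfl, Nat.lt_succ_self _⟩
      · rw [slt_inr_inr he.1]; exact Or.inr ⟨hn, hlt⟩
  · rintro ⟨hn, hi⟩
    constructor
    · rw [slt_inr_inr he.1]; exact Or.inr ⟨hn, by omega⟩
    · intro z hz1 hz2
      cases z with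
      | inl a => exact not_slt_inr_inl hz1
      | inr m =>
        rw [slt_inr_inr he.1] at hz1 hz2
        rcases hz1 with hz1 | ⟨hz1, hz1'⟩ <;> rcases hz2 with hz2 | ⟨hz2, hz2'⟩
        · rw [hn] at hz1; exact absurd (hz1.trans hz2) (lt_irrefl _)
        · rw [hz2, ← hn] at hz1; exact absurd hz1 (lt_irrefl _)
        · rw [← hz1, hn] at hz2; exact absurd hz2 (lt_irrefl _)
        · omega

/-- the top of a column is covered by nothing. -/
lemma not_cov_top (he : Function.Bijective e) {c : CElt} (hc : c.val.2 = c.val.1)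
    (y : Ω ⊕ CElt) : ¬ Cov Ω e (.inr c) y := by
  cases y with
  | inl a => exact not_cov_inr_inl a c
  | inr d =>
    intro h
    obtain ⟨hn, hi⟩ := (cov_inr_inr_iff he).1 h
    have := d.property
    omega

/-- anything covering an element of `C` is its within-column predecessor. -/
lemma cov_inr_right (he : Function.Bijective e) {y : Ω ⊕ CElt} {d : CElt}
    (h : Cov Ω e y (.inr d)) :
    ∃ c : CElt, y = .inr c ∧ c.val.1 = d.val.1 ∧ d.val.2 = c.val.2 + 1 := by
  cases y with
  | inl a => exact absurd h (not_cov_inl_inr he a d)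
  | inr c => exact ⟨c, rfl, (cov_inr_inr_iff he).1 h⟩

/-- `x` is the top of a maximal cover-chain of length `n` (so of `n+1` points). -/
def MaxBlock (Ω : Type) [LinearOrder Ω] (e : ℕ → ℚ) (n : ℕ) (x : Ω ⊕ CElt) : Prop :=
  (∀ y, ¬ Cov Ω e x y) ∧
    ∃ g : ℕ → Ω ⊕ CElt, g n = x ∧ (∀ i, i < n → Cov Ω e (g i) (g (i + 1))) ∧
      ∀ y, ¬ Cov Ω e y (g 0)

lemma maxBlock_top (he : Function.Bijective e) (n : ℕ) :
    MaxBlock Ω e n (.inr (cmk n n le_rfl)) := by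
  refine ⟨not_cov_top he rfl,
    fun i => .inr (cmk n (min i n) (min_le_right i n)), ?_, ?_, ?_⟩
  · simp [cmk]
  · intro i hi
    refine (cov_inr_inr_iff he).2 ⟨rfl, ?_⟩
    simp only [cmk_snd]
    omega
  · intro y hy
    obtain ⟨c, -, -, hi⟩ := cov_inr_right he hy
    simp at hi

lemma maxBlock_le (he : Function.Bijective e) {n : ℕ} {x : Ω ⊕ CElt}
    (h : MaxBlock Ω e n x) : SumLe Ω e x (.inr (cmk n n le_rfl)) := by
  obtain ⟨htop, g, hgn, hchain, hbot⟩ := h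
  cases hx : x with
  | inl a => exact r_inl_inr a _
  | inr c =>
    -- walk the chain downwards
    have key : ∀ k, k ≤ n → ∃ ck : CElt, g (n - k) = .inr ck ∧
        ck.val.1 = c.val.1 ∧ ck.val.2 + k = c.val.2 := by
      intro k
      induction k with
      | zero => intro _; exact ⟨c, by simpa [hx] using hgn, rfl, rfl⟩
      | succ k ih =>
        intro hk
        obtain ⟨ck, hgk, h1, h2⟩ := ih (by omega)
        have hcov : Cov Ω e (g (n - k - 1)) (g (n - k)) := by
          have hc := hchain (n - k - 1) (by omega)
          have harith : n - k - 1 + 1 = n - k := by omega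
          rwa [harith] at hc
        rw [hgk] at hcov
        obtain ⟨c', hy, h1', h2'⟩ := cov_inr_right he hcov
        have harith2 : n - (k + 1) = n - k - 1 := by omega
        exact ⟨c', by rwa [harith2], by omega, by omega⟩
    obtain ⟨c0, hg0, hc1, hc2⟩ := key n le_rfl
    rw [Nat.sub_self] at hg0
    -- c0.val.2 = 0, else something covers g 0
    have hz : c0.val.2 = 0 := by
      by_contra hne
      have hle : c0.val.2 - 1 ≤ c0.val.1 := by have := c0.property; omega
      refine hbot (.inr (cmk c0.val.1 (c0.val.2 - 1) hle)) ?_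
      rw [hg0]
      exact (cov_inr_inr_iff he).2 ⟨rfl, by simp; omega⟩
    -- c.val.2 = c.val.1, else x is covered
    have htopc : c.val.2 = c.val.1 := by
      by_contra hne
      have hlt : c.val.2 + 1 ≤ c.val.1 := by have := c.property; omega
      refine htop (.inr (cmk c.val.1 (c.val.2 + 1) hlt)) ?_
      rw [hx]
      exact (cov_inr_inr_iff he).2 ⟨rfl, by simp⟩
    rw [r_inr_inr]
    exact Or.inr ⟨by simp; omega, by simp; omega⟩

section Equivariance

variable (f : SumLe Ω e ≃r SumLe Ω e)

lemma slt_map {x y : Ω ⊕ CElt} : Slt Ω e (f x) (f y) ↔ Slt Ω e x y := by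
  unfold Slt; rw [f.map_rel_iff]

lemma cov_map_fwd {x y : Ω ⊕ CElt} (h : Cov Ω e x y) : Cov Ω e (f x) (f y) := by
  refine ⟨(slt_map f).2 h.1, fun z hz1 hz2 => ?_⟩
  obtain ⟨w, rfl⟩ := f.surjective z
  exact h.2 w ((slt_map f).1 hz1) ((slt_map f).1 hz2)

lemma maxBlock_map {n : ℕ} {x : Ω ⊕ CElt} (h : MaxBlock Ω e n x) :
    MaxBlock Ω e n (f x) := by
  obtain ⟨htop, g, hgn, hchain, hbot⟩ := h
  refine ⟨?_, fun i => f (g i), by show f (g n) = f x; rw [hgn],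
    fun i hi => cov_map_fwd f (hchain i hi), ?_⟩
  · intro y hy
    obtain ⟨w, rfl⟩ := f.surjective y
    refine htop w ?_
    have hc := cov_map_fwd f.symm hy
    simpa using hc
  · intro y hy
    obtain ⟨w, rfl⟩ := f.surjective y
    refine hbot w ?_
    have hc := cov_map_fwd f.symm hy
    simpa using hc

end Equivariance

lemma fixes_top (he : Function.Bijective e) (f : SumLe Ω e ≃r SumLe Ω e) (n : ℕ) :
    f (.inr (cmk n n le_rfl)) = .inr (cmk n n le_rfl) := by
  have h1 : SumLe Ω e (f (.inr (cmk n n le_rfl))) (.inr (cmk n n le_rfl)) :=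
    maxBlock_le he (maxBlock_map f (maxBlock_top he n))
  have h2 : SumLe Ω e (f.symm (.inr (cmk n n le_rfl))) (.inr (cmk n n le_rfl)) :=
    maxBlock_le he (maxBlock_map f.symm (maxBlock_top he n))
  have h2' : SumLe Ω e (.inr (cmk n n le_rfl)) (f (.inr (cmk n n le_rfl))) := by
    have hc := f.map_rel_iff.2 h2
    rwa [RelIso.apply_symm_apply] at hc
  exact r_antisymm he.1 h1 h2'

lemma fixes_inr (he : Function.Bijective e) (f : SumLe Ω e ≃r SumLe Ω e) (c : CElt) :
    f (.inr c) = .inr c := by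
  suffices h : ∀ j (c : CElt), c.val.1 - c.val.2 = j → f (.inr c) = .inr c from h _ c rfl
  intro j
  induction j with
  | zero =>
    intro c hc
    have h1 : c.val.2 = c.val.1 := by have := c.property; omega
    have hc' : c = cmk c.val.1 c.val.1 le_rfl := Subtype.ext (Prod.ext rfl h1)
    rw [hc']
    exact fixes_top he f c.val.1
  | succ j ih =>
    intro c hc
    have hlt : c.val.2 + 1 ≤ c.val.1 := by omega
    have hfix' : f (.inr (cmk c.val.1 (c.val.2 + 1) hlt)) = .inr (cmk c.val.1 (c.val.2 + 1) hlt) :=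
      ih _ (by simp; omega)
    have hcov : Cov Ω e (.inr c) (.inr (cmk c.val.1 (c.val.2 + 1) hlt)) :=
      (cov_inr_inr_iff he).2 ⟨rfl, rfl⟩
    have hcov2 : Cov Ω e (f (.inr c)) (.inr (cmk c.val.1 (c.val.2 + 1) hlt)) := by
      have hc2 := cov_map_fwd f hcov
      rwa [hfix'] at hc2
    obtain ⟨c'', hy, h1, h2⟩ := cov_inr_right he hcov2
    rw [hy]
    congr 1
    refine Subtype.ext (Prod.ext ?_ ?_)
    · simpa using h1
    · simp at h2; omega

lemma maps_inl (he : Function.Bijective e) (f : SumLe Ω e ≃r SumLe Ω e) (a : Ω) :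
    ∃ b : Ω, f (.inl a) = .inl b := by
  cases hfa : f (.inl a) with
  | inl b => exact ⟨b, rfl⟩
  | inr c =>
    have : f (.inl a) = f (.inr c) := by rw [hfa, fixes_inr he f c]
    exact absurd (f.injective this) (by simp)

/-- the restriction of an automorphism of the sum to `Ω` (junk on impossible case). -/
def extract (f : SumLe Ω e ≃r SumLe Ω e) (a : Ω) : Ω :=
  Sum.elim id (fun _ => a) (f (.inl a))

lemma extract_spec (he : Function.Bijective e) (f : SumLe Ω e ≃r SumLe Ω e) (a : Ω) :
    Sum.inl (extract f a) = f (.inl a) := by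
  obtain ⟨b, hb⟩ := maps_inl he f a
  rw [extract, hb]
  rfl

/-- the induced order automorphism of `Ω`. -/
def restrict (he : Function.Bijective e) (f : SumLe Ω e ≃r SumLe Ω e) : Ω ≃o Ω where
  toFun := extract f
  invFun := extract f.symm
  left_inv a := by
    have h1 := extract_spec he f a
    have h2 := extract_spec he f.symm (extract f a)
    rw [h1, RelIso.symm_apply_apply] at h2
    exact Sum.inl_injective h2
  right_inv a := by
    have h1 := extract_spec he f.symm a
    have h2 := extract_spec he f (extract f.symm a)
    rw [h1, RelIso.apply_symm_apply] at h2
    exact Sum.inl_injective h2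
  map_rel_iff' := by
    intro a b
    show extract f a ≤ extract f b ↔ a ≤ b
    rw [← @r_inl_inl Ω _ e (extract f a), extract_spec he, extract_spec he,
      f.map_rel_iff, r_inl_inl]

/-- extension of an automorphism of `Ω` to the sum. -/
def extend (g : Ω ≃o Ω) : SumLe Ω e ≃r SumLe Ω e where
  toEquiv := Equiv.sumCongr g.toEquiv (Equiv.refl CElt)
  map_rel_iff' := by
    intro x y
    cases x with
    | inl a =>
      cases y with
      | inl b => simpa [SumLe] using g.map_rel_iff
      | inr c => simp [SumLe]
    | inr c =>
      cases y with
      | inl b => simp [SumLe]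
      | inr d => simp [SumLe]

lemma extend_inl (g : Ω ≃o Ω) (a : Ω) : extend (e := e) g (.inl a) = .inl (g a) := rfl
lemma extend_inr (g : Ω ≃o Ω) (c : CElt) : extend (e := e) g (.inr c) = .inr c := rfl

end Stmt8

open Stmt8 in
/-- the automorphism group of the ordered sum `Ω + C_e` is
isomorphic to the automorphism group of Ω. -/
theorem stmt_8 (Ω : Type) [LinearOrder Ω] (e : ℕ → ℚ)
    (he : Function.Bijective e) :
    Nonempty ((SumLe Ω e ≃r SumLe Ω e) ≃* (Ω ≃o Ω)) := by
  refine ⟨{ toFun := restrict he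
            invFun := extend
            left_inv := ?_
            right_inv := ?_
            map_mul' := ?_ }⟩
  · intro f
    apply RelIso.ext
    intro x
    cases x with
    | inl a =>
      show extend (restrict he f) (.inl a) = f (.inl a)
      rw [extend_inl]
      exact extract_spec he f a
    | inr c =>
      show extend (restrict he f) (.inr c) = f (.inr c)
      rw [extend_inr, fixes_inr he f c]
  · intro g
    apply OrderIso.ext
    funext a
    show extract (extend (e := e) g) a = g a
    have h := extract_spec he (extend (e := e) g) a
    rw [extend_inl] at h
    exact Sum.inl_injective h.symm
  · intro f g
    apply OrderIso.ext
    funext a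
    show extract (f * g) a = extract f (extract g a)
    apply Sum.inl_injective
    rw [extract_spec he (f * g), extract_spec he f, extract_spec he g]
    rfl
end

section
/- Let Ω be any linearly ordered set and let e₁, e₂ : ℕ → ℚ be bijections. Then the ordered sums Ω + C_{e₁} and Ω + C_{e₂} are order-isomorphic if and only if C_{e₁} and C_{e₂} are order-isomorphic. -/
namespace Stmt9

open Sum Function Set

/-- "Finitely many points between `x` and `y`". -/
def sim {α : Type*} (r : α → α → Prop) (x y : α) : Prop :=
  {z | (r x z ∧ r z y) ∨ (r y z ∧ r z x)}.Finite

lemma sim_comm {α : Type*} {r : α → α → Prop} {x y : α} (h : sim r x y) : sim r y x := by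
  have : {z | (r y z ∧ r z x) ∨ (r x z ∧ r z y)}
      = {z | (r x z ∧ r z y) ∨ (r y z ∧ r z x)} := by
    ext z; exact or_comm
  unfold sim
  rw [this]
  exact h

lemma sim_map {α β : Type*} {r : α → α → Prop} {s : β → β → Prop} (F : r ≃r s)
    {x y : α} (h : sim r x y) : sim s (F x) (F y) := by
  have key : {z | (s (F x) z ∧ s z (F y)) ∨ (s (F y) z ∧ s z (F x))}
      = F.toEquiv.symm ⁻¹' {z | (r x z ∧ r z y) ∨ (r y z ∧ r z x)} := by
    ext z
    simp only [Set.mem_setOf_eq, Set.mem_preimage]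
    have h1 : ∀ a : α, s (F a) z ↔ r a (F.toEquiv.symm z) := by
      intro a
      conv_lhs => rw [show z = F (F.toEquiv.symm z) from (F.apply_symm_apply z).symm]
      exact F.map_rel_iff
    have h2 : ∀ a : α, s z (F a) ↔ r (F.toEquiv.symm z) a := by
      intro a
      conv_lhs => rw [show z = F (F.toEquiv.symm z) from (F.apply_symm_apply z).symm]
      exact F.map_rel_iff
    rw [h1, h1, h2, h2]
  unfold sim
  rw [key]
  exact h.preimage (F.toEquiv.symm.injective.injOn)

lemma sim_congr {α β : Type*} {r : α → α → Prop} {s : β → β → Prop} (F : r ≃r s)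
    (x y : α) : sim r x y ↔ sim s (F x) (F y) := by
  constructor
  · exact sim_map F
  · intro h
    have := sim_map F.symm h
    simpa using this

/-- Infinitely many elements of `C_e` lie in any rational interval. -/
lemma infinite_between {e : ℕ → ℚ} (he : Function.Bijective e) {a b : ℚ} (hab : a < b) :
    {x : CElt | a < e x.val.1 ∧ e x.val.1 < b}.Infinite := by
  have hI : Infinite ↑(Set.Ioo a b) := Set.Ioo.infinite hab
  let E := Equiv.ofBijective e he
  apply Set.infinite_of_injective_forall_mem
    (f := fun q : Set.Ioo a b => (⟨(E.symm q.val, 0), Nat.zero_le _⟩ : CElt))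
  · intro q₁ q₂ hq
    have : E.symm q₁.val = E.symm q₂.val := congrArg (fun x : CElt => x.val.1) hq
    exact Subtype.ext (E.symm.injective this)
  · intro q
    have h : e (E.symm q.val) = q.val := E.apply_symm_apply q.val
    show a < e (E.symm q.val) ∧ e (E.symm q.val) < b
    rw [h]
    exact ⟨q.prop.1, q.prop.2⟩

lemma infinite_below {e : ℕ → ℚ} (he : Function.Bijective e) (b : ℚ) :
    {x : CElt | e x.val.1 < b}.Infinite := by
  have hI : Infinite ↑(Set.Iio b) := (Set.Iio_infinite b).to_subtype
  let E := Equiv.ofBijective e he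
  apply Set.infinite_of_injective_forall_mem
    (f := fun q : Set.Iio b => (⟨(E.symm q.val, 0), Nat.zero_le _⟩ : CElt))
  · intro q₁ q₂ hq
    have : E.symm q₁.val = E.symm q₂.val := congrArg (fun x : CElt => x.val.1) hq
    exact Subtype.ext (E.symm.injective this)
  · intro q
    have h : e (E.symm q.val) = q.val := E.apply_symm_apply q.val
    show e (E.symm q.val) < b
    rw [h]
    exact q.prop

lemma finite_block (n : ℕ) : {y : CElt | y.val.1 = n}.Finite := by
  have hsub : {y : CElt | y.val.1 = n} ⊆
      Set.range (fun i : Fin (n+1) => (⟨(n, i.val), Nat.lt_succ_iff.mp i.isLt⟩ : CElt)) := by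
    intro y hy
    refine ⟨⟨y.val.2, ?_⟩, ?_⟩
    · have := y.prop
      simp only [Set.mem_setOf_eq] at hy
      omega
    · apply Subtype.ext
      simp only [Set.mem_setOf_eq] at hy
      exact Prod.ext hy.symm rfl
  exact (Set.finite_range _).subset hsub

def blockEquiv (n : ℕ) : {y : CElt | y.val.1 = n} ≃ Fin (n+1) where
  toFun y := ⟨y.val.val.2, by
    have h1 := y.val.prop
    have h2 : y.val.val.1 = n := y.prop
    omega⟩
  invFun i := ⟨⟨(n, i.val), Nat.lt_succ_iff.mp i.isLt⟩, rfl⟩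
  left_inv y := by
    apply Subtype.ext
    apply Subtype.ext
    have h2 : y.val.val.1 = n := y.prop
    exact Prod.ext h2.symm rfl
  right_inv i := rfl

variable {Ω : Type} [LinearOrder Ω] {e : ℕ → ℚ}

lemma not_sim_inl_inr (he : Function.Bijective e) (w : Ω) (x : CElt) :
    ¬ sim (SumLe Ω e) (Sum.inl w) (Sum.inr x) := by
  intro h
  have hsub : Sum.inr '' {u : CElt | e u.val.1 < e x.val.1} ⊆
      {z | (SumLe Ω e (Sum.inl w) z ∧ SumLe Ω e z (Sum.inr x)) ∨
           (SumLe Ω e (Sum.inr x) z ∧ SumLe Ω e z (Sum.inl w))} := by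
    rintro z ⟨u, hu, rfl⟩
    left
    exact ⟨Sum.Lex.sep _ _, Sum.lex_inr_inr.mpr (Or.inl hu)⟩
  exact (((infinite_below he (e x.val.1)).image Sum.inr_injective.injOn).mono hsub) h

lemma sim_inr_same (x y : CElt) (hxy : x.val.1 = y.val.1) :
    sim (SumLe Ω e) (Sum.inr x) (Sum.inr y) := by
  apply ((finite_block x.val.1).image Sum.inr).subset
  rintro (w | u) hz
  · rcases hz with ⟨h1, h2⟩ | ⟨h1, h2⟩ <;> exact absurd h1 Sum.lex_inr_inl
  · refine ⟨u, ?_, rfl⟩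
    show u.val.1 = x.val.1
    rcases hz with ⟨h1, h2⟩ | ⟨h1, h2⟩
    · have c1 : Cle e x u := Sum.lex_inr_inr.mp h1
      have c2 : Cle e u y := Sum.lex_inr_inr.mp h2
      rcases c1 with c1 | c1
      · rcases c2 with c2 | c2
        · have h3 := c1.trans c2
          rw [hxy] at h3
          exact absurd h3 (lt_irrefl _)
        · rw [c2.1, ← hxy] at c1
          exact absurd c1 (lt_irrefl _)
      · exact c1.1.symm
    · have c1 : Cle e y u := Sum.lex_inr_inr.mp h1
      have c2 : Cle e u x := Sum.lex_inr_inr.mp h2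
      rcases c2 with c2 | c2
      · rcases c1 with c1 | c1
        · have h3 := c1.trans c2
          rw [hxy] at h3
          exact absurd h3 (lt_irrefl _)
        · rw [← c1.1, ← hxy] at c2
          exact absurd c2 (lt_irrefl _)
      · exact c2.1

lemma not_sim_inr_ne (he : Function.Bijective e) (x y : CElt) (hne : x.val.1 ≠ y.val.1) :
    ¬ sim (SumLe Ω e) (Sum.inr x) (Sum.inr y) := by
  intro h
  have hene : e x.val.1 ≠ e y.val.1 := fun hc => hne (he.injective hc)
  rcases lt_or_gt_of_ne hene with hlt | hlt
  · have hsub : Sum.inr '' {u : CElt | e x.val.1 < e u.val.1 ∧ e u.val.1 < e y.val.1} ⊆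
        {z | (SumLe Ω e (Sum.inr x) z ∧ SumLe Ω e z (Sum.inr y)) ∨
             (SumLe Ω e (Sum.inr y) z ∧ SumLe Ω e z (Sum.inr x))} := by
      rintro z ⟨u, hu, rfl⟩
      left
      exact ⟨Sum.lex_inr_inr.mpr (Or.inl hu.1), Sum.lex_inr_inr.mpr (Or.inl hu.2)⟩
    exact (((infinite_between he hlt).image Sum.inr_injective.injOn).mono hsub) h
  · have hsub : Sum.inr '' {u : CElt | e y.val.1 < e u.val.1 ∧ e u.val.1 < e x.val.1} ⊆
        {z | (SumLe Ω e (Sum.inr x) z ∧ SumLe Ω e z (Sum.inr y)) ∨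
             (SumLe Ω e (Sum.inr y) z ∧ SumLe Ω e z (Sum.inr x))} := by
      rintro z ⟨u, hu, rfl⟩
      right
      exact ⟨Sum.lex_inr_inr.mpr (Or.inl hu.1), Sum.lex_inr_inr.mpr (Or.inl hu.2)⟩
    exact (((infinite_between he hlt).image Sum.inr_injective.injOn).mono hsub) h

lemma sim_inr_iff (he : Function.Bijective e) (x : CElt) (z : Ω ⊕ CElt) :
    sim (SumLe Ω e) (Sum.inr x) z ↔ ∃ y, z = Sum.inr y ∧ y.val.1 = x.val.1 := by
  cases z with
  | inl w =>
    constructor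
    · intro h
      exact absurd (sim_comm h) (not_sim_inl_inr he w x)
    · rintro ⟨y, hy, -⟩
      exact absurd hy (by simp)
  | inr u =>
    constructor
    · intro h
      by_contra hc
      push_neg at hc
      have hne : x.val.1 ≠ u.val.1 := fun hh => (hc u rfl) hh.symm
      exact (not_sim_inr_ne he x u hne) h
    · rintro ⟨y, hy, h1⟩
      cases Sum.inr_injective hy
      exact sim_inr_same x u h1.symm

/-- The equivalence class of `x` under the finiteness relation. -/
def cls {α : Type*} (r : α → α → Prop) (x : α) : Set α := {z | sim r x z}

lemma cls_map {α β : Type*} {r : α → α → Prop} {s : β → β → Prop} (F : r ≃r s) (x : α) :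
    cls s (F x) = F '' cls r x := by
  ext z
  constructor
  · intro hz
    have := sim_map F.symm hz
    rw [F.symm_apply_apply] at this
    exact ⟨F.symm z, this, F.apply_symm_apply z⟩
  · rintro ⟨u, hu, rfl⟩
    exact sim_map F hu

lemma cls_inr (he : Function.Bijective e) (x : CElt) :
    cls (SumLe Ω e) (Sum.inr x) = Sum.inr '' {y : CElt | y.val.1 = x.val.1} := by
  ext z
  simp only [cls, Set.mem_setOf_eq, sim_inr_iff he, Set.mem_image]
  constructor
  · rintro ⟨y, rfl, hy⟩; exact ⟨y, hy, rfl⟩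
  · rintro ⟨y, hy, rfl⟩; exact ⟨y, rfl, hy⟩

/-- Any isomorphism of the sums maps the `C` part into the `C` part. -/
lemma maps_inr {Ω : Type} [LinearOrder Ω] {e₁ e₂ : ℕ → ℚ}
    (h₁ : Function.Bijective e₁) (h₂ : Function.Bijective e₂)
    (F : SumLe Ω e₁ ≃r SumLe Ω e₂) (x : CElt) :
    ∃ y, F (Sum.inr x) = Sum.inr y := by
  rcases hFx : F (Sum.inr x) with w | y
  · exfalso
    set s := x.val.1 with hs
    set y₂ : CElt := ⟨(s, 0), Nat.zero_le _⟩ with hy₂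
    rcases hG : F.symm (Sum.inr y₂) with v | d
    · have h1 : SumLe Ω e₁ (Sum.inl v) (Sum.inr x) := Sum.Lex.sep _ _
      have h2 := F.map_rel_iff.mpr h1
      have hv : F (Sum.inl v) = Sum.inr y₂ := by rw [← hG, F.apply_symm_apply]
      rw [hFx, hv] at h2
      exact Sum.lex_inr_inl h2
    · have hd : F (Sum.inr d) = Sum.inr y₂ := by rw [← hG, F.apply_symm_apply]
      have hcls : (F '' cls (SumLe Ω e₁) (Sum.inr d) : Set (Ω ⊕ CElt))
          = Sum.inr '' {y : CElt | y.val.1 = s} := by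
        rw [← cls_map F, hd, cls_inr h₂]
      have E : Fin (d.val.1 + 1) ≃ Fin (s + 1) := by
        refine (blockEquiv d.val.1).symm.trans ?_
        refine (Equiv.Set.image (Sum.inr : CElt → Ω ⊕ CElt) _ Sum.inr_injective).trans ?_
        refine (Equiv.setCongr (cls_inr h₁ d).symm).trans ?_
        refine (Equiv.Set.image (⇑F) _ F.injective).trans ?_
        refine (Equiv.setCongr hcls).trans ?_
        exact (Equiv.Set.image (Sum.inr : CElt → Ω ⊕ CElt) _ Sum.inr_injective).symm.trans
          (blockEquiv s)
      have hcard : d.val.1 = s := Nat.succ_injective (Fin.equiv_iff_eq.mp ⟨E⟩)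
      have hsim : sim (SumLe Ω e₁) (Sum.inr d) (Sum.inr x) :=
        sim_inr_same d x (by rw [hcard])
      have := sim_map F hsim
      rw [hd, hFx] at this
      exact not_sim_inl_inr h₂ w y₂ (sim_comm this)
  · exact ⟨y, rfl⟩

end Stmt9

/-- `Ω + C_{e₁}` and `Ω + C_{e₂}` are order-isomorphic iff
`C_{e₁}` and `C_{e₂}` are order-isomorphic. -/
theorem stmt_9 (Ω : Type) [LinearOrder Ω] (e₁ e₂ : ℕ → ℚ)
    (h₁ : Function.Bijective e₁) (h₂ : Function.Bijective e₂) :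
    Nonempty (SumLe Ω e₁ ≃r SumLe Ω e₂) ↔ Nonempty (Cle e₁ ≃r Cle e₂) := by
  constructor
  · rintro ⟨F⟩
    choose g hg using Stmt9.maps_inr h₁ h₂ F
    choose f hf using Stmt9.maps_inr h₂ h₁ F.symm
    refine ⟨⟨⟨g, f, ?_, ?_⟩, ?_⟩⟩
    · intro x
      have := hf (g x)
      rw [← hg x, F.symm_apply_apply] at this
      exact (Sum.inr_injective this).symm
    · intro y
      have := hg (f y)
      rw [← hf y, F.apply_symm_apply] at this
      exact (Sum.inr_injective this).symm
    · intro a b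
      simp only [Equiv.coe_fn_mk]
      have key : SumLe Ω e₂ (F (Sum.inr a)) (F (Sum.inr b)) ↔ Cle e₁ a b :=
        F.map_rel_iff.trans Sum.lex_inr_inr
      rw [hg a, hg b] at key
      exact (Sum.lex_inr_inr (r := ((· ≤ ·) : Ω → Ω → Prop)) (s := Cle e₂)).symm.trans key
  · rintro ⟨G⟩
    exact ⟨RelIso.sumLexCongr (RelIso.refl ((· ≤ ·) : Ω → Ω → Prop)) G⟩
end

section
/- Let f : ℚ → ℚ be an order-preserving map whose image contains at least two elements. Then there exists a family (g_t)_{t ∈ ℝ} of order-preserving maps ℚ → ℚ such that each g_t is 𝒟-related to f and, for distinct s, t ∈ ℝ, the maps g_s and g_t are not ℛ-related. Consequently the 𝒟-class of f contains 2^ℵ0 many ℛ-classes. -/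
/-- f is ℒ-related to g in End(ℚ,≤). -/
def LRel (f g : ℚ → ℚ) : Prop :=
  ∃ u v : ℚ → ℚ, Monotone u ∧ Monotone v ∧ g = f ∘ u ∧ f = g ∘ v

/-- f is ℛ-related to g in End(ℚ,≤). -/
def RRel (f g : ℚ → ℚ) : Prop :=
  ∃ u v : ℚ → ℚ, Monotone u ∧ Monotone v ∧ g = u ∘ f ∧ f = v ∘ g

/-- f is 𝒟-related to g in End(ℚ,≤). -/
def DRel (f g : ℚ → ℚ) : Prop :=
  ∃ h : ℚ → ℚ, Monotone h ∧ LRel f h ∧ RRel h g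

section Aux

open Real

/-- A strictly monotone map from `ℝ` into `(0,1)`. -/
noncomputable def sig01 (t : ℝ) : ℝ := Real.arctan t / Real.pi + 1 / 2

lemma sig01_pos (t : ℝ) : 0 < sig01 t := by
  have hpi := Real.pi_pos
  have h2 : -(Real.pi / 2) < Real.arctan t := Real.neg_pi_div_two_lt_arctan t
  have : -(1 / 2 : ℝ) < Real.arctan t / Real.pi := by
    rw [lt_div_iff₀ hpi]; linarith
  unfold sig01; linarith

lemma sig01_lt_one (t : ℝ) : sig01 t < 1 := by
  have hpi := Real.pi_pos
  have h1 : Real.arctan t < Real.pi / 2 := Real.arctan_lt_pi_div_two t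
  have : Real.arctan t / Real.pi < 1 / 2 := by
    rw [div_lt_iff₀ hpi]; linarith
  unfold sig01; linarith

lemma sig01_strictMono : StrictMono sig01 := by
  intro a b hab
  have hpi := Real.pi_pos
  have := Real.arctan_strictMono hab
  unfold sig01
  have : Real.arctan a / Real.pi < Real.arctan b / Real.pi :=
    div_lt_div_of_pos_right this hpi
  linarith

/-- A strictly monotone family of reals in the interval `(lo, hi)`. -/
noncomputable def cFam (lo hi : ℝ) (t : ℝ) : ℝ := lo + (hi - lo) * sig01 t

lemma cFam_gt {lo hi : ℝ} (h : lo < hi) (t : ℝ) : lo < cFam lo hi t := by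
  have h1 := sig01_pos t
  unfold cFam; nlinarith

lemma cFam_lt {lo hi : ℝ} (h : lo < hi) (t : ℝ) : cFam lo hi t < hi := by
  have h1 := sig01_lt_one t
  unfold cFam; nlinarith

lemma cFam_strictMono {lo hi : ℝ} (h : lo < hi) : StrictMono (cFam lo hi) := by
  intro a b hab
  have := sig01_strictMono hab
  unfold cFam; nlinarith

/-- The rationals above a real cut. -/
abbrev Sset (c : ℝ) : Type := {x : ℚ // c < (x : ℝ)}

instance Sset.nonempty (c : ℝ) : Nonempty (Sset c) := by
  obtain ⟨q, hq⟩ := exists_rat_gt c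
  exact ⟨⟨q, hq⟩⟩

instance Sset.noMax (c : ℝ) : NoMaxOrder (Sset c) := by
  constructor
  rintro ⟨a, ha⟩
  refine ⟨⟨a + 1, by push_cast; linarith⟩, ?_⟩
  rw [Subtype.mk_lt_mk]; linarith

instance Sset.noMin (c : ℝ) : NoMinOrder (Sset c) := by
  constructor
  rintro ⟨a, ha⟩
  obtain ⟨m, hm1, hm2⟩ := exists_rat_btwn ha
  exact ⟨⟨m, hm1⟩, by rw [Subtype.mk_lt_mk]; exact_mod_cast hm2⟩

instance Sset.dense (c : ℝ) : DenselyOrdered (Sset c) := by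
  constructor
  rintro ⟨a, ha⟩ ⟨b, hb⟩ hab
  rw [Subtype.mk_lt_mk] at hab
  have hab' : (a : ℝ) < (b : ℝ) := by exact_mod_cast hab
  refine ⟨⟨(a + b) / 2, by push_cast; linarith⟩, ?_, ?_⟩ <;>
    rw [Subtype.mk_lt_mk] <;> linarith

/-- Any two such sets of rationals are order isomorphic. -/
noncomputable def isoS (c d : ℝ) : Sset c ≃o Sset d :=
  (Order.iso_of_countable_dense (Sset c) (Sset d)).some

lemma not_RRel_left {g₁ g₂ : ℚ → ℚ} (x y : ℚ) (h1 : g₁ x = g₁ y) (h2 : g₂ x ≠ g₂ y) :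
    ¬ RRel g₁ g₂ := by
  rintro ⟨u, v, _, _, huv, _⟩
  apply h2
  have hx : g₂ x = u (g₁ x) := by rw [huv]; rfl
  have hy : g₂ y = u (g₁ y) := by rw [huv]; rfl
  rw [hx, hy, h1]

lemma not_RRel_right {g₁ g₂ : ℚ → ℚ} (x y : ℚ) (h1 : g₂ x = g₂ y) (h2 : g₁ x ≠ g₁ y) :
    ¬ RRel g₁ g₂ := by
  rintro ⟨u, v, _, _, _, hvu⟩
  apply h2
  have hx : g₁ x = v (g₂ x) := by rw [hvu]; rfl
  have hy : g₁ y = v (g₂ y) := by rw [hvu]; rfl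
  rw [hx, hy, h1]

lemma DRel_section (f v u : ℚ → ℚ) (hf : Monotone f) (hv : Monotone v) (hu : Monotone u)
    (h : ∀ x, f (v (u x)) = f x) : DRel (f ∘ v) f :=
  ⟨f, hf, ⟨u, v, hu, hv, funext fun x => (h x).symm, rfl⟩,
    ⟨id, id, monotone_id, monotone_id, rfl, rfl⟩⟩

/-- Case A : some point is strictly below every point above it in value. -/
lemma caseA (f : ℚ → ℚ) (hf : Monotone f) (r : ℚ) (hr : ∀ x : ℚ, r < x → f r < f x) :
    ∃ g : ℝ → (ℚ → ℚ),
      (∀ t : ℝ, Monotone (g t)) ∧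
      (∀ t : ℝ, DRel (g t) f) ∧
      (∀ s t : ℝ, s ≠ t → ¬ RRel (g s) (g t)) := by
  classical
  have hlh : (r : ℝ) < (r : ℝ) + 1 := by linarith
  set ct : ℝ → ℝ := cFam (r : ℝ) ((r : ℝ) + 1) with hct_def
  have hct1 : ∀ t, (r : ℝ) < ct t := fun t => cFam_gt hlh t
  have hctmono : StrictMono ct := cFam_strictMono hlh
  set θ : ∀ t : ℝ, Sset (ct t) ≃o Sset (r : ℝ) := fun t => isoS _ _ with hθ_def
  set v : ℝ → ℚ → ℚ :=
    fun t x => if h : ct t < (x : ℝ) then ((θ t) ⟨x, h⟩ : ℚ) else min x r with hv_def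
  -- basic value facts
  have hv_high : ∀ t (x : ℚ) (h : ct t < (x : ℝ)), v t x = ((θ t) ⟨x, h⟩ : ℚ) := by
    intro t x h; simp only [hv_def, dif_pos h]
  have hv_low : ∀ t (x : ℚ), ¬ ct t < (x : ℝ) → v t x = min x r := by
    intro t x h; simp only [hv_def, dif_neg h]
  have hθgt : ∀ t (z : Sset (ct t)), r < ((θ t) z : ℚ) := by
    intro t z
    have := ((θ t) z).2
    exact_mod_cast this
  have hvmono : ∀ t, Monotone (v t) := by
    intro t x y hxy
    by_cases hx : ct t < (x : ℝ) <;> by_cases hy : ct t < (y : ℝ)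
    · rw [hv_high t x hx, hv_high t y hy]
      have h1 : (⟨x, hx⟩ : Sset (ct t)) ≤ ⟨y, hy⟩ := Subtype.mk_le_mk.mpr hxy
      exact_mod_cast (θ t).monotone h1
    · exact absurd (lt_of_lt_of_le hx (by exact_mod_cast hxy)) hy
    · rw [hv_low t x hx, hv_high t y hy]
      exact le_trans (min_le_right x r) (hθgt t ⟨y, hy⟩).le
    · rw [hv_low t x hx, hv_low t y hy]
      exact min_le_min hxy le_rfl
  -- section u
  have hrcast : ∀ x : ℚ, r < x → (r : ℝ) < (x : ℝ) := fun x h => by exact_mod_cast h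
  set u : ℝ → ℚ → ℚ :=
    fun t x => if h : r < x then (((θ t).symm ⟨x, hrcast x h⟩ : Sset (ct t)) : ℚ) else x
    with hu_def
  have hu_high : ∀ t (x : ℚ) (h : r < x),
      u t x = (((θ t).symm ⟨x, hrcast x h⟩ : Sset (ct t)) : ℚ) := by
    intro t x h; simp only [hu_def, dif_pos h]
  have hu_low : ∀ t (x : ℚ), ¬ r < x → u t x = x := by
    intro t x h; simp only [hu_def, dif_neg h]
  have hsymm_gt : ∀ t (z : Sset (r : ℝ)), ct t < (((θ t).symm z : Sset (ct t)) : ℚ) :=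
    fun t z => ((θ t).symm z).2
  have humono : ∀ t, Monotone (u t) := by
    intro t x y hxy
    by_cases hx : r < x <;> by_cases hy : r < y
    · rw [hu_high t x hx, hu_high t y hy]
      have h1 : (⟨x, hrcast x hx⟩ : Sset (r : ℝ)) ≤ ⟨y, hrcast y hy⟩ := Subtype.mk_le_mk.mpr hxy
      exact_mod_cast (θ t).symm.monotone h1
    · exact absurd (lt_of_lt_of_le hx hxy) hy
    · rw [hu_low t x hx, hu_high t y hy]
      have h1 : (r : ℝ) < (((θ t).symm ⟨y, hrcast y hy⟩ : Sset (ct t)) : ℚ) :=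
        (hct1 t).trans (hsymm_gt t _)
      have h2 : r < (((θ t).symm ⟨y, hrcast y hy⟩ : Sset (ct t)) : ℚ) := by exact_mod_cast h1
      exact (not_lt.mp hx).trans h2.le
    · rw [hu_low t x hx, hu_low t y hy]; exact hxy
  have hsection : ∀ t x, f (v t (u t x)) = f x := by
    intro t x
    by_cases hx : r < x
    · rw [hu_high t x hx]
      set z : Sset (ct t) := (θ t).symm ⟨x, hrcast x hx⟩ with hz_def
      have h1 : ct t < ((z : ℚ) : ℝ) := z.2
      rw [hv_high t (z : ℚ) h1]
      have h2 : (⟨(z : ℚ), h1⟩ : Sset (ct t)) = z := Subtype.ext rfl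
      rw [h2, hz_def, OrderIso.apply_symm_apply]
    · have h0 : ¬ ct t < ((x : ℝ)) := by
        intro h; exact hx (by exact_mod_cast (hct1 t).trans h)
      rw [hu_low t x hx, hv_low t x h0, min_eq_left (not_lt.mp hx)]
  refine ⟨fun t => f ∘ v t, fun t => hf.comp (hvmono t), fun t =>
    DRel_section f (v t) (u t) hf (hvmono t) (humono t) (hsection t), ?_⟩
  -- pairwise non-R-related
  have key : ∀ s t : ℝ, ct s < ct t →
      ∃ x y : ℚ, (f ∘ v t) x = (f ∘ v t) y ∧ (f ∘ v s) x ≠ (f ∘ v s) y := by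
    intro s t hst
    obtain ⟨x, hx1, hx2⟩ := exists_rat_btwn hst
    have hrx : r < x := by exact_mod_cast (hct1 s).trans hx1
    have hvtr : ∀ w : ℝ, (r:ℝ) < ct w → v w r = r := by
      intro w hw
      rw [hv_low w r (by exact not_lt.mpr hw.le), min_self]
    refine ⟨r, x, ?_, ?_⟩
    · have h1 : v t r = r := hvtr t (hct1 t)
      have h2 : v t x = r := by
        rw [hv_low t x (not_lt.mpr hx2.le), min_eq_right hrx.le]
      simp only [Function.comp_apply, h1, h2]
    · have h1 : v s r = r := hvtr s (hct1 s)
      have h2 : v s x = ((θ s) ⟨x, hx1⟩ : ℚ) := hv_high s x hx1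
      simp only [Function.comp_apply, h1, h2]
      exact (hr _ (hθgt s ⟨x, hx1⟩)).ne
  intro s t hst
  rcases hst.lt_or_gt with h | h
  · obtain ⟨x, y, h1, h2⟩ := key s t (hctmono h)
    exact not_RRel_right x y h1 h2
  · obtain ⟨x, y, h1, h2⟩ := key t s (hctmono h)
    exact not_RRel_left x y h1 h2

/-- Case B : every point has a point above it with the same value. -/
lemma caseB (f : ℚ → ℚ) (hf : Monotone f) (p q : ℚ) (hpq : f p < f q)
    (hB : ∀ z : ℚ, ∃ x, z < x ∧ f x = f z) :
    ∃ g : ℝ → (ℚ → ℚ),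
      (∀ t : ℝ, Monotone (g t)) ∧
      (∀ t : ℝ, DRel (g t) f) ∧
      (∀ s t : ℝ, s ≠ t → ¬ RRel (g s) (g t)) := by
  classical
  set E : Set ℝ := (fun z : ℚ => (z : ℝ)) '' {z : ℚ | f z = f p} with hE_def
  have hE_ne : E.Nonempty := ⟨(p : ℝ), ⟨p, rfl, rfl⟩⟩
  have hE_bdd : BddAbove E := by
    refine ⟨(q : ℝ), ?_⟩
    rintro _ ⟨z, hz, rfl⟩
    have : z < q := by
      by_contra hzq
      exact absurd (hz ▸ hf (not_lt.mp hzq)) (not_le.mpr hpq)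
    show (z : ℝ) ≤ (q : ℝ)
    exact_mod_cast this.le
  set ξ : ℝ := sSup E with hξ_def
  have hpξ : (p : ℝ) < ξ := by
    obtain ⟨x₀, h1, h2⟩ := hB p
    have hx₀ : (x₀ : ℝ) ≤ ξ := le_csSup hE_bdd ⟨x₀, h2, rfl⟩
    have : (p : ℝ) < (x₀ : ℝ) := by exact_mod_cast h1
    linarith
  have key1 : ∀ z : ℚ, p ≤ z → (z : ℝ) < ξ → f z = f p := by
    intro z h1 h2
    obtain ⟨e, heE, hlt⟩ := exists_lt_of_lt_csSup hE_ne h2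
    obtain ⟨w, hw, rfl⟩ := heE
    have hlt' : (z : ℝ) < (w : ℝ) := hlt
    have hzw : z ≤ w := by exact_mod_cast hlt'.le
    exact le_antisymm (hw ▸ hf hzw) (hf h1)
  have key2 : ∀ z : ℚ, ξ < (z : ℝ) → f p < f z := by
    intro z h
    have hpz : p < z := by exact_mod_cast hpξ.trans h
    rcases (hf hpz.le).lt_or_eq with h' | h'
    · exact h'
    · exfalso
      have : (z : ℝ) ≤ ξ := le_csSup hE_bdd ⟨z, h'.symm, rfl⟩
      exact absurd h (not_lt.mpr this)
  set ct : ℝ → ℝ := cFam (p : ℝ) ξ with hct_def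
  have hct1 : ∀ t, (p : ℝ) < ct t := fun t => cFam_gt hpξ t
  have hct2 : ∀ t, ct t < ξ := fun t => cFam_lt hpξ t
  have hctmono : StrictMono ct := cFam_strictMono hpξ
  -- middle point
  have hpt : ∀ t : ℝ, ∃ m : ℚ, ct t < (m : ℝ) ∧ (m : ℝ) < ξ := fun t => exists_rat_btwn (hct2 t)
  set pt : ℝ → ℚ := fun t => (hpt t).choose with hpt_def
  have hpt1 : ∀ t, ct t < ((pt t : ℚ) : ℝ) := fun t => (hpt t).choose_spec.1
  have hpt2 : ∀ t, ((pt t : ℚ) : ℝ) < ξ := fun t => (hpt t).choose_spec.2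
  set θ : ∀ t : ℝ, Sset (ct t) ≃o Sset ξ := fun t => isoS _ _ with hθ_def
  have hθgt : ∀ t (z : Sset (ct t)), ξ < (((θ t) z : ℚ) : ℝ) := fun t z => ((θ t) z).2
  set v : ℝ → ℚ → ℚ :=
    fun t x => if h : ct t < (x : ℝ) then ((θ t) ⟨x, h⟩ : ℚ)
      else if (x : ℝ) < ct t then x else pt t with hv_def
  have hv_high : ∀ t (x : ℚ) (h : ct t < (x : ℝ)), v t x = ((θ t) ⟨x, h⟩ : ℚ) := by
    intro t x h; simp only [hv_def, dif_pos h]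
  have hv_low : ∀ t (x : ℚ), (x : ℝ) < ct t → v t x = x := by
    intro t x h; simp only [hv_def, dif_neg (asymm h), if_pos h]
  have hv_mid : ∀ t (x : ℚ), ¬ ct t < (x : ℝ) → ¬ (x : ℝ) < ct t → v t x = pt t := by
    intro t x h1 h2; simp only [hv_def, dif_neg h1, if_neg h2]
  -- v is monotone
  have hvmono : ∀ t, Monotone (v t) := by
    intro t x y hxy
    have hxy' : (x : ℝ) ≤ (y : ℝ) := by exact_mod_cast hxy
    by_cases hy : ct t < (y : ℝ)
    · by_cases hx : ct t < (x : ℝ)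
      · rw [hv_high t x hx, hv_high t y hy]
        have h1 : (⟨x, hx⟩ : Sset (ct t)) ≤ ⟨y, hy⟩ := Subtype.mk_le_mk.mpr hxy
        exact_mod_cast (θ t).monotone h1
      · have hval : (x : ℝ) ≤ ct t := not_lt.mp hx
        have hgoal : ((v t x : ℚ) : ℝ) ≤ ((v t y : ℚ) : ℝ) := by
          rw [hv_high t y hy]
          by_cases hx2 : (x : ℝ) < ct t
          · rw [hv_low t x hx2]
            exact le_of_lt (lt_trans (lt_trans hx2 (hct2 t)) (hθgt t ⟨y, hy⟩))
          · rw [hv_mid t x hx hx2]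
            exact le_of_lt (lt_trans (hpt2 t) (hθgt t ⟨y, hy⟩))
        exact_mod_cast hgoal
    · have hx : ¬ ct t < (x : ℝ) := fun h => hy (lt_of_lt_of_le h hxy')
      by_cases hy2 : (y : ℝ) < ct t
      · have hx2 : (x : ℝ) < ct t := lt_of_le_of_lt hxy' hy2
        rw [hv_low t x hx2, hv_low t y hy2]; exact hxy
      · rw [hv_mid t y hy hy2]
        by_cases hx2 : (x : ℝ) < ct t
        · rw [hv_low t x hx2]
          have : (x : ℝ) < ((pt t : ℚ) : ℝ) := lt_trans hx2 (hpt1 t)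
          exact_mod_cast this.le
        · rw [hv_mid t x hx hx2]
  -- selection function landing above ξ
  have hgex : ∀ x : ℚ, f p < f x → ξ ≤ (x : ℝ) := by
    intro x hx
    by_contra hc
    push_neg at hc
    have hpx : p ≤ x := by
      by_contra h
      push_neg at h
      exact absurd (hf h.le) (not_le.mpr hx)
    exact absurd (key1 x hpx hc) hx.ne'
  obtain ⟨sel, hselmono, hselval, hselgt⟩ :
      ∃ sel : ℚ → ℚ, Monotone sel ∧ (∀ x, f p < f x → f (sel x) = f x) ∧
        (∀ x, f p < f x → ξ < ((sel x : ℚ) : ℝ)) := by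
    by_cases hξQ : ∃ z₀ : ℚ, (z₀ : ℝ) = ξ
    · obtain ⟨z₀, hz₀⟩ := hξQ
      obtain ⟨w, hw1, hw2⟩ := hB z₀
      refine ⟨fun x => max x w, fun a b hab => max_le_max hab le_rfl, ?_, ?_⟩
      · intro x hx
        show f (max x w) = f x
        rcases le_total w x with h | h
        · rw [max_eq_left h]
        · rw [max_eq_right h]
          have h1 : z₀ ≤ x := by
            have := hgex x hx; rw [← hz₀] at this; exact_mod_cast this
          exact le_antisymm (hw2.le.trans (hf h1)) (hf h)
      · intro x hx
        show ξ < ((max x w : ℚ) : ℝ)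
        have h1 : (z₀ : ℝ) < (w : ℝ) := by exact_mod_cast hw1
        have h2 : (w : ℝ) ≤ ((max x w : ℚ) : ℝ) := by exact_mod_cast le_max_right x w
        calc ξ = (z₀ : ℝ) := hz₀.symm
          _ < (w : ℝ) := h1
          _ ≤ _ := h2
    · refine ⟨id, monotone_id, fun x _ => rfl, ?_⟩
      intro x hx
      rcases (hgex x hx).lt_or_eq with h | h
      · exact h
      · exact absurd ⟨x, h.symm⟩ hξQ
  set u : ℝ → ℚ → ℚ :=
    fun t x => if h : f p < f x then (((θ t).symm ⟨sel x, hselgt x h⟩ : Sset (ct t)) : ℚ)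
      else min x p with hu_def
  have hu_high : ∀ t (x : ℚ) (h : f p < f x),
      u t x = (((θ t).symm ⟨sel x, hselgt x h⟩ : Sset (ct t)) : ℚ) := by
    intro t x h; simp only [hu_def, dif_pos h]
  have hu_low : ∀ t (x : ℚ), ¬ f p < f x → u t x = min x p := by
    intro t x h; simp only [hu_def, dif_neg h]
  have hsymm_gt : ∀ t (z : Sset ξ), ct t < ((((θ t).symm z : Sset (ct t)) : ℚ) : ℝ) :=
    fun t z => ((θ t).symm z).2
  have humono : ∀ t, Monotone (u t) := by
    intro t x y hxy
    by_cases hx : f p < f x <;> by_cases hy : f p < f y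
    · rw [hu_high t x hx, hu_high t y hy]
      have h1 : (⟨sel x, hselgt x hx⟩ : Sset ξ) ≤ ⟨sel y, hselgt y hy⟩ :=
        Subtype.mk_le_mk.mpr (hselmono hxy)
      exact_mod_cast (θ t).symm.monotone h1
    · exact absurd (lt_of_lt_of_le hx (hf hxy)) hy
    · rw [hu_low t x hx, hu_high t y hy]
      have h1 : ((min x p : ℚ) : ℝ) < ((((θ t).symm ⟨sel y, hselgt y hy⟩ : Sset (ct t)) : ℚ) : ℝ) := by
        have hm : ((min x p : ℚ) : ℝ) ≤ (p : ℝ) := by exact_mod_cast min_le_right x p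
        exact lt_of_le_of_lt hm (lt_trans (hct1 t) (hsymm_gt t _))
      exact_mod_cast h1.le
    · rw [hu_low t x hx, hu_low t y hy]
      exact min_le_min hxy le_rfl
  have hsection : ∀ t x, f (v t (u t x)) = f x := by
    intro t x
    by_cases hx : f p < f x
    · rw [hu_high t x hx]
      set z : Sset (ct t) := (θ t).symm ⟨sel x, hselgt x hx⟩ with hz_def
      have h1 : ct t < ((z : ℚ) : ℝ) := z.2
      rw [hv_high t (z : ℚ) h1]
      have h2 : (⟨(z : ℚ), h1⟩ : Sset (ct t)) = z := Subtype.ext rfl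
      rw [h2, hz_def, OrderIso.apply_symm_apply]
      exact hselval x hx
    · rw [hu_low t x hx]
      have hm : ((min x p : ℚ) : ℝ) < ct t := by
        have : ((min x p : ℚ) : ℝ) ≤ (p : ℝ) := by exact_mod_cast min_le_right x p
        exact lt_of_le_of_lt this (hct1 t)
      rw [hv_low t (min x p) hm]
      rcases le_total x p with h | h
      · rw [min_eq_left h]
      · rw [min_eq_right h]
        exact le_antisymm (hf h) (not_lt.mp hx)
  -- fix the section value equation in the low case
  refine ⟨fun t => f ∘ v t, fun t => hf.comp (hvmono t), fun t =>
    DRel_section f (v t) (u t) hf (hvmono t) (humono t) (hsection t), ?_⟩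
  have key : ∀ s t : ℝ, ct s < ct t →
      ∃ x y : ℚ, (f ∘ v t) x = (f ∘ v t) y ∧ (f ∘ v s) x ≠ (f ∘ v s) y := by
    intro s t hst
    obtain ⟨x, hx1, hx2⟩ := exists_rat_btwn hst
    refine ⟨p, x, ?_, ?_⟩
    · have h1 : v t p = p := hv_low t p (hct1 t)
      have h2 : v t x = x := hv_low t x hx2
      have h3 : f x = f p := key1 x (by exact_mod_cast ((hct1 s).trans hx1).le) (hx2.trans (hct2 t))
      simp only [Function.comp_apply, h1, h2, h3]
    · have h1 : v s p = p := hv_low s p (hct1 s)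
      have h2 : v s x = ((θ s) ⟨x, hx1⟩ : ℚ) := hv_high s x hx1
      simp only [Function.comp_apply, h1, h2]
      exact (key2 _ (hθgt s ⟨x, hx1⟩)).ne
  intro s t hst
  rcases hst.lt_or_gt with h | h
  · obtain ⟨x, y, h1, h2⟩ := key s t (hctmono h)
    exact not_RRel_right x y h1 h2
  · obtain ⟨x, y, h1, h2⟩ := key t s (hctmono h)
    exact not_RRel_left x y h1 h2

end Aux

/-- if the image of a monotone `f : ℚ → ℚ` has at least two
elements, then the 𝒟-class of `f` contains a real-indexed family of maps that
are pairwise non-ℛ-related; hence it contains continuum many ℛ-classes. -/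
theorem stmt_10 (f : ℚ → ℚ) (hf : Monotone f)
    (h2 : ∃ a b, a ∈ Set.range f ∧ b ∈ Set.range f ∧ a ≠ b) :
    ∃ g : ℝ → (ℚ → ℚ),
      (∀ t : ℝ, Monotone (g t)) ∧
      (∀ t : ℝ, DRel (g t) f) ∧
      (∀ s t : ℝ, s ≠ t → ¬ RRel (g s) (g t)) := by
  classical
  by_cases hA : ∃ r : ℚ, ∀ x : ℚ, r < x → f r < f x
  · obtain ⟨r, hr⟩ := hA
    exact caseA f hf r hr
  · push_neg at hA
    have hB : ∀ z : ℚ, ∃ x, z < x ∧ f x = f z := by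
      intro z
      obtain ⟨x, h1, h3⟩ := hA z
      exact ⟨x, h1, le_antisymm h3 (hf h1.le)⟩
    obtain ⟨a, b, ⟨p, hp⟩, ⟨q, hq⟩, hab⟩ := h2
    have hne : f p ≠ f q := by rw [hp, hq]; exact hab
    rcases hne.lt_or_gt with h | h
    · exact caseB f hf p q h hB
    · exact caseB f hf q p h hB
end

section
/- Let f : ℚ → ℚ be an order-preserving map whose image is infinite. Then there exists a family (g_t)_{t ∈ ℝ} of order-preserving maps ℚ → ℚ such that each g_t is 𝒟-related to f and, for distinct s, t ∈ ℝ, the maps g_s and g_t are not ℒ-related. Consequently the 𝒟-class of f contains 2^ℵ0 many ℒ-classes. -/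
/-!
A map `g` in the 𝒟-class of `f` is obtained as `φ ∘ f` whenever `φ` is monotone with a monotone
left inverse, and ℒ-related maps have the same image. Choose a strictly monotone sequence `a` in
the image of `f` (after conjugating by `x ↦ -x` if only a decreasing one exists). For `A ⊆ ℕ` let
`φ_A` be the identity except on the blocks `[a n, a (n+1))` with `n ∈ A`, which it squeezes affinely
into their upper halves. Then `a n` lies in the image of `φ_A ∘ f` iff `n ∉ A`, so the sets
`A_t = {n | q_n < t}`, for an enumeration `q` of ℚ, give pairwise non-ℒ-related maps `φ_{A_t} ∘ f`.
-/

open Set Function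

section Blockwise

variable {α : Type*} [LinearOrder α] {a : ℕ → α} {v w : ℕ → α → α} {x y z : α} {k n : ℕ}

open Classical in
noncomputable def blockwise (a : ℕ → α) (v : ℕ → α → α) (x : α) : α :=
  if h : ∃ n, x ∈ Ico (a n) (a (n + 1)) then v h.choose x else x

theorem StrictMono.le_iff_of_mem_Ico (ha : StrictMono a) (hz : z ∈ Ico (a n) (a (n + 1))) :
    a k ≤ z ↔ k ≤ n :=
  ⟨fun h => Nat.lt_succ_iff.mp (ha.lt_iff_lt.mp (h.trans_lt hz.2)),
    fun h => (ha.monotone h).trans hz.1⟩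

theorem blockwise_of_mem (ha : StrictMono a) (hx : x ∈ Ico (a n) (a (n + 1))) :
    blockwise a v x = v n x := by
  have hex : ∃ m, x ∈ Ico (a m) (a (m + 1)) := ⟨n, hx⟩
  have hm := hex.choose_spec
  have : hex.choose = n :=
    le_antisymm ((ha.le_iff_of_mem_Ico hx).mp hm.1) ((ha.le_iff_of_mem_Ico hm).mp hx.1)
  rw [blockwise, dif_pos hex, this]

theorem blockwise_of_forall_notMem (hx : ∀ n, x ∉ Ico (a n) (a (n + 1))) :
    blockwise a v x = x := by
  rw [blockwise, dif_neg (not_exists.mpr hx)]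

variable (hmaps : ∀ n, MapsTo (v n) (Ico (a n) (a (n + 1))) (Ico (a n) (a (n + 1))))
include hmaps

theorem le_blockwise_iff (ha : StrictMono a) : a k ≤ blockwise a v y ↔ a k ≤ y := by
  by_cases hy : ∃ n, y ∈ Ico (a n) (a (n + 1))
  · obtain ⟨n, hn⟩ := hy
    rw [blockwise_of_mem ha hn, ha.le_iff_of_mem_Ico hn, ha.le_iff_of_mem_Ico (hmaps n hn)]
  · rw [blockwise_of_forall_notMem (not_exists.mp hy)]

theorem blockwise_lt_iff (ha : StrictMono a) : blockwise a v y < a k ↔ y < a k :=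
  not_le.symm.trans ((le_blockwise_iff hmaps ha).not.trans not_le)

theorem monotone_blockwise (ha : StrictMono a)
    (hmono : ∀ n, MonotoneOn (v n) (Ico (a n) (a (n + 1)))) : Monotone (blockwise a v) := by
  have separated : ∀ {x y k}, x < a k → a k ≤ y → blockwise a v x ≤ blockwise a v y :=
    fun hx hy => ((blockwise_lt_iff hmaps ha).mpr hx).le.trans ((le_blockwise_iff hmaps ha).mpr hy)
  intro x y hxy
  by_cases hx : ∃ m, x ∈ Ico (a m) (a (m + 1))
  · obtain ⟨m, hm⟩ := hx
    by_cases hy : y ∈ Ico (a m) (a (m + 1))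
    · rw [blockwise_of_mem ha hm, blockwise_of_mem ha hy]
      exact hmono m hm hy hxy
    · exact separated hm.2 (not_lt.mp fun h => hy ⟨hm.1.trans hxy, h⟩)
  · by_cases hy : ∃ n, y ∈ Ico (a n) (a (n + 1))
    · obtain ⟨n, hn⟩ := hy
      exact separated (not_le.mp fun h => not_exists.mp hx n ⟨h, hxy.trans_lt hn.2⟩) hn.1
    · rwa [blockwise_of_forall_notMem (not_exists.mp hx),
        blockwise_of_forall_notMem (not_exists.mp hy)]

theorem leftInverse_blockwise (ha : StrictMono a)
    (hinv : ∀ n, ∀ x ∈ Ico (a n) (a (n + 1)), w n (v n x) = x) :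
    LeftInverse (blockwise a w) (blockwise a v) := by
  intro x
  by_cases hx : ∃ n, x ∈ Ico (a n) (a (n + 1))
  · obtain ⟨n, hn⟩ := hx
    rw [blockwise_of_mem ha hn, blockwise_of_mem ha (hmaps n hn), hinv n x hn]
  · simp only [blockwise_of_forall_notMem (not_exists.mp hx)]

theorem exists_eq_of_mem_range_blockwise (ha : StrictMono a) (hy : y ∈ Ico (a n) (a (n + 1)))
    (hrange : y ∈ range (blockwise a v)) : ∃ x ∈ Ico (a n) (a (n + 1)), v n x = y := by
  obtain ⟨x, rfl⟩ := hrange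
  have hx : x ∈ Ico (a n) (a (n + 1)) :=
    ⟨(le_blockwise_iff hmaps ha).mp hy.1, (blockwise_lt_iff hmaps ha).mp hy.2⟩
  exact ⟨x, hx, (blockwise_of_mem ha hx).symm⟩

end Blockwise

section Squeeze

open Classical

variable {K : Type*} [Field K] [LinearOrder K] [IsStrictOrderedRing K] {a : ℕ → K} {A : Set ℕ}
  {n : ℕ}

noncomputable def squeezeBlock (a : ℕ → K) (A : Set ℕ) (n : ℕ) (x : K) : K :=
  if n ∈ A then (x + a (n + 1)) / 2 else x

noncomputable def unsqueezeBlock (a : ℕ → K) (A : Set ℕ) (n : ℕ) (y : K) : K :=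
  if n ∈ A then max (2 * y - a (n + 1)) (a n) else y

noncomputable def squeeze (a : ℕ → K) (A : Set ℕ) : K → K := blockwise a (squeezeBlock a A)

noncomputable def unsqueeze (a : ℕ → K) (A : Set ℕ) : K → K := blockwise a (unsqueezeBlock a A)

theorem mapsTo_squeezeBlock (ha : StrictMono a) (n : ℕ) :
    MapsTo (squeezeBlock a A n) (Ico (a n) (a (n + 1))) (Ico (a n) (a (n + 1))) := by
  have := ha n.lt_succ_self
  intro x ⟨h₁, h₂⟩
  unfold squeezeBlock
  split_ifs
  · constructor <;> linarith
  · exact ⟨h₁, h₂⟩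

theorem mapsTo_unsqueezeBlock (ha : StrictMono a) (n : ℕ) :
    MapsTo (unsqueezeBlock a A n) (Ico (a n) (a (n + 1))) (Ico (a n) (a (n + 1))) := by
  have := ha n.lt_succ_self
  intro y ⟨h₁, h₂⟩
  unfold unsqueezeBlock
  split_ifs
  · exact ⟨le_max_right _ _, max_lt (by linarith) this⟩
  · exact ⟨h₁, h₂⟩

theorem monotone_squeezeBlock (a : ℕ → K) (A : Set ℕ) (n : ℕ) :
    Monotone (squeezeBlock a A n) := fun x y hxy => by
  unfold squeezeBlock
  split_ifs
  · linarith
  · exact hxy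

theorem monotone_unsqueezeBlock (a : ℕ → K) (A : Set ℕ) (n : ℕ) :
    Monotone (unsqueezeBlock a A n) := fun x y hxy => by
  unfold unsqueezeBlock
  split_ifs
  · exact max_le_max_right _ (by linarith)
  · exact hxy

theorem monotone_squeeze (ha : StrictMono a) (A : Set ℕ) : Monotone (squeeze a A) :=
  monotone_blockwise (mapsTo_squeezeBlock ha) ha fun n => (monotone_squeezeBlock a A n).monotoneOn _

theorem monotone_unsqueeze (ha : StrictMono a) (A : Set ℕ) : Monotone (unsqueeze a A) :=
  monotone_blockwise (mapsTo_unsqueezeBlock ha) ha fun n =>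
    (monotone_unsqueezeBlock a A n).monotoneOn _

theorem leftInverse_unsqueeze_squeeze (ha : StrictMono a) (A : Set ℕ) :
    LeftInverse (unsqueeze a A) (squeeze a A) := by
  refine leftInverse_blockwise (mapsTo_squeezeBlock ha) ha fun n x hx => ?_
  unfold squeezeBlock unsqueezeBlock
  split_ifs
  · rw [show 2 * ((x + a (n + 1)) / 2) - a (n + 1) = x by ring, max_eq_left hx.1]
  · rfl

omit [IsStrictOrderedRing K] in
theorem squeeze_apply_of_notMem (ha : StrictMono a) (hn : n ∉ A) : squeeze a A (a n) = a n := by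
  rw [squeeze, blockwise_of_mem ha ⟨le_rfl, ha n.lt_succ_self⟩, squeezeBlock, if_neg hn]

theorem notMem_range_squeeze (ha : StrictMono a) (hn : n ∈ A) : a n ∉ range (squeeze a A) := by
  intro hrange
  obtain ⟨x, hx, hxn⟩ := exists_eq_of_mem_range_blockwise (mapsTo_squeezeBlock ha) ha
    ⟨le_rfl, ha n.lt_succ_self⟩ hrange
  rw [squeezeBlock, if_pos hn] at hxn
  linarith [hx.1, ha n.lt_succ_self]

end Squeeze

/-- The lower Dedekind cut of `t`, as a set of codes of rationals. -/
def ratCut (t : ℝ) : Set ℕ := {n | ((Denumerable.eqv ℚ).symm n : ℝ) < t}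

theorem exists_mem_ratCut_notMem {s t : ℝ} (h : s < t) : ∃ n ∈ ratCut t, n ∉ ratCut s := by
  obtain ⟨q, hsq, hqt⟩ := exists_rat_btwn h
  refine ⟨Denumerable.eqv ℚ q, ?_, ?_⟩ <;> simp only [ratCut, mem_ofPred_eq, Equiv.symm_apply_apply]
  · exact hqt
  · exact hsq.le.not_gt

theorem LRel.range_eq {f g : ℚ → ℚ} (h : LRel f g) : range f = range g := by
  obtain ⟨u, v, -, -, hu, hv⟩ := h
  exact (hv ▸ range_comp_subset_range v g).antisymm (hu ▸ range_comp_subset_range u f)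

theorem drel_comp_of_leftInverse {f φ ψ : ℚ → ℚ} (hf : Monotone f) (hφ : Monotone φ)
    (hψ : Monotone ψ) (h : LeftInverse ψ φ) : DRel (φ ∘ f) f :=
  ⟨φ ∘ f, hφ.comp hf, ⟨id, id, monotone_id, monotone_id, rfl, rfl⟩,
    ⟨ψ, φ, hψ, hφ, by rw [← comp_assoc, h.comp_eq_id, id_comp], rfl⟩⟩

theorem exists_family_of_strictMono {f : ℚ → ℚ} (hf : Monotone f) {a : ℕ → ℚ}
    (ha : StrictMono a) (hmem : ∀ n, a n ∈ range f) :
    ∃ g : ℝ → (ℚ → ℚ), (∀ t, Monotone (g t)) ∧ (∀ t, DRel (g t) f) ∧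
      ∀ s t, s ≠ t → ¬ LRel (g s) (g t) := by
  set g : ℝ → ℚ → ℚ := fun t => squeeze a (ratCut t) ∘ f
  have range_ne : ∀ s t, s < t → range (g s) ≠ range (g t) := by
    intro s t hst hrange
    obtain ⟨n, hnt, hns⟩ := exists_mem_ratCut_notMem hst
    obtain ⟨x, hx⟩ := hmem n
    have : a n ∈ range (g t) := hrange ▸ ⟨x, by simp [g, hx, squeeze_apply_of_notMem ha hns]⟩
    exact notMem_range_squeeze ha hnt (range_comp_subset_range _ _ this)
  refine ⟨g, fun t => (monotone_squeeze ha _).comp hf, fun t => drel_comp_of_leftInverse hf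
    (monotone_squeeze ha _) (monotone_unsqueeze ha _) (leftInverse_unsqueeze_squeeze ha _), ?_⟩
  intro s t hst hL
  rcases hst.lt_or_gt with h | h
  · exact range_ne s t h hL.range_eq
  · exact range_ne t s h hL.range_eq.symm

/-- Conjugation by `x ↦ -x`, an automorphism of the monoid End(ℚ,≤). -/
def negConj (F : ℚ → ℚ) : ℚ → ℚ := fun x => -F (-x)

@[simp]
theorem negConj_negConj (F : ℚ → ℚ) : negConj (negConj F) = F :=
  funext fun x => by simp [negConj]

theorem negConj_comp (F G : ℚ → ℚ) : negConj (F ∘ G) = negConj F ∘ negConj G :=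
  funext fun x => by simp [negConj]

theorem Monotone.negConj {F : ℚ → ℚ} (h : Monotone F) : Monotone (negConj F) :=
  fun _ _ hxy => neg_le_neg (h (neg_le_neg hxy))

theorem LRel.negConj {F G : ℚ → ℚ} (h : LRel F G) : LRel (negConj F) (negConj G) := by
  obtain ⟨u, v, hu, hv, rfl, hG⟩ := h
  exact ⟨_root_.negConj u, _root_.negConj v, hu.negConj, hv.negConj, negConj_comp F u,
    by rw [← negConj_comp, ← hG]⟩

theorem RRel.negConj {F G : ℚ → ℚ} (h : RRel F G) : RRel (negConj F) (negConj G) := by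
  obtain ⟨u, v, hu, hv, rfl, hG⟩ := h
  exact ⟨_root_.negConj u, _root_.negConj v, hu.negConj, hv.negConj, negConj_comp u F,
    by rw [← negConj_comp, ← hG]⟩

theorem DRel.negConj {F G : ℚ → ℚ} (h : DRel F G) : DRel (negConj F) (negConj G) := by
  obtain ⟨H, hH, hL, hR⟩ := h
  exact ⟨_root_.negConj H, hH.negConj, hL.negConj, hR.negConj⟩

theorem exists_family_of_strictAnti {f : ℚ → ℚ} (hf : Monotone f) {a : ℕ → ℚ}
    (ha : StrictAnti a) (hmem : ∀ n, a n ∈ range f) :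
    ∃ g : ℝ → (ℚ → ℚ), (∀ t, Monotone (g t)) ∧ (∀ t, DRel (g t) f) ∧
      ∀ s t, s ≠ t → ¬ LRel (g s) (g t) := by
  have hmem' : ∀ n, -a n ∈ range (negConj f) := fun n => by
    obtain ⟨x, hx⟩ := hmem n
    exact ⟨-x, by simp [negConj, hx]⟩
  obtain ⟨g, hmono, hD, hL⟩ :=
    exists_family_of_strictMono hf.negConj (fun m n h => neg_lt_neg (ha h)) hmem'
  refine ⟨fun t => negConj (g t), fun t => (hmono t).negConj, fun t => ?_, fun s t hst h => ?_⟩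
  · simpa using (hD t).negConj
  · exact hL s t hst (by simpa using h.negConj)

/-- if the image of a monotone `f : ℚ → ℚ` is infinite, then the
𝒟-class of `f` contains a real-indexed family of maps that are pairwise
non-ℒ-related; hence it contains continuum many ℒ-classes. -/
theorem stmt_11 (f : ℚ → ℚ) (hf : Monotone f)
    (hinf : (Set.range f).Infinite) :
    ∃ g : ℝ → (ℚ → ℚ),
      (∀ t : ℝ, Monotone (g t)) ∧
      (∀ t : ℝ, DRel (g t) f) ∧
      (∀ s t : ℝ, s ≠ t → ¬ LRel (g s) (g t)) := by
  have := hinf.to_subtype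
  obtain ⟨a, ha | ha⟩ := Infinite.exists_strictMono_or_strictAnti (Set.range f)
  · exact exists_family_of_strictMono hf ((Subtype.strictMono_coe _).comp ha) fun n => (a n).2
  · exact exists_family_of_strictAnti hf ((Subtype.strictMono_coe _).comp_strictAnti ha)
      fun n => (a n).2
end

section
/- Let f : ℚ → ℚ be an order-preserving map whose image is a finite set. Then f is a regular element of End(ℚ,≤); that is, there exists an order-preserving map g : ℚ → ℚ such that f ∘ g ∘ f = f. -/
/-- an order-preserving map `ℚ → ℚ` with finite image is a
regular element of `End(ℚ,≤)`. -/
theorem stmt_12 (f : ℚ → ℚ) (hf : Monotone f) (hfin : (Set.range f).Finite) :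
    ∃ g : ℚ → ℚ, Monotone g ∧ f ∘ g ∘ f = f := by
  classical
  set T : Finset ℚ := hfin.toFinset with hTdef
  have hmem : ∀ v, v ∈ T ↔ v ∈ Set.range f := fun v => hfin.mem_toFinset
  have hTne : T.Nonempty := ⟨f 0, (hmem _).2 ⟨0, rfl⟩⟩
  -- a section of f on its range
  let c : ℚ → ℚ := fun v => if h : v ∈ Set.range f then h.choose else 0
  have hfc : ∀ v ∈ Set.range f, f (c v) = v := by
    intro v hv
    simp only [c, dif_pos hv]
    exact hv.choose_spec
  have hcmono : ∀ v ∈ T, ∀ w ∈ T, v ≤ w → c v ≤ c w := by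
    intro v hv w hw hvw
    by_contra h
    push_neg at h
    have : f (c w) ≤ f (c v) := hf h.le
    rw [hfc v ((hmem v).1 hv), hfc w ((hmem w).1 hw)] at this
    have : v = w := le_antisymm hvw this
    exact absurd (congrArg c this) h.ne'
  -- projection onto T
  let F : ℚ → Finset ℚ := fun q => T.filter (· ≤ q)
  let p : ℚ → ℚ := fun q => if h : (F q).Nonempty then (F q).max' h else T.min' hTne
  have hpT : ∀ q, p q ∈ T := by
    intro q
    by_cases h : (F q).Nonempty
    · simpa [p, h] using Finset.mem_filter.1 ((F q).max'_mem h) |>.1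
    · simpa [p, h] using T.min'_mem hTne
  have hpmono : ∀ q q', q ≤ q' → p q ≤ p q' := by
    intro q q' hqq'
    by_cases h : (F q).Nonempty
    · have h' : (F q').Nonempty := by
        obtain ⟨x, hx⟩ := h
        exact ⟨x, Finset.mem_filter.2 ⟨(Finset.mem_filter.1 hx).1,
          le_trans (Finset.mem_filter.1 hx).2 hqq'⟩⟩
      have : (F q).max' h ∈ F q' := by
        have hm := (F q).max'_mem h
        exact Finset.mem_filter.2 ⟨(Finset.mem_filter.1 hm).1,
          le_trans (Finset.mem_filter.1 hm).2 hqq'⟩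
      simpa [p, h, h'] using (F q').le_max' _ this
    · by_cases h' : (F q').Nonempty
      · have : T.min' hTne ≤ (F q').max' h' := by
          have hm := (F q').max'_mem h'
          exact T.min'_le _ (Finset.mem_filter.1 hm).1
        simpa [p, h, h'] using this
      · simp [p, h, h']
  have hpfix : ∀ x, p (f x) = f x := by
    intro x
    have hfx : f x ∈ F (f x) :=
      Finset.mem_filter.2 ⟨(hmem _).2 ⟨x, rfl⟩, le_refl _⟩
    have h : (F (f x)).Nonempty := ⟨f x, hfx⟩
    have h1 : (F (f x)).max' h ≤ f x := (Finset.mem_filter.1 ((F (f x)).max'_mem h)).2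
    have h2 : f x ≤ (F (f x)).max' h := (F (f x)).le_max' _ hfx
    simp [p, h, le_antisymm h1 h2]
  refine ⟨fun q => c (p q), ?_, ?_⟩
  · intro q q' hqq'
    exact hcmono _ (hpT q) _ (hpT q') (hpmono q q' hqq')
  · funext x
    simp only [Function.comp_apply, hpfix x]
    exact hfc (f x) ⟨x, rfl⟩
end

section
/- Let X ⊆ ℚ be partitioned into two disjoint nonempty subsets X = X₋ ∪ X₊ with every element of X₋ strictly less than every element of X₊. Suppose α, β ∈ ℝ are, respectively, the least upper bound of X₋ and the greatest lower bound of X₊ (viewing X₋, X₊ as subsets of ℝ), and that neither α nor β equals any element of X. Then there exists a non-regular order-preserving map f : ℚ → ℚ whose image, with the order induced from ℚ, is order-isomorphic to the ordered set X. -/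
/-!
Since `α` and `β` lie outside `X`, the part `X₋` has no greatest and `X₊` no least element.
Cantor's theorem gives `ℚ ≃o X ×ₗ ℚ`, so the first projection is a monotone surjection
`ℚ → X`; composing it with an embedding of `X` into `ℚ` that puts `X₋` below `0` and `X₊`
above `0` yields `f`. If `f ∘ g ∘ f = f` with `g` monotone, then `g` is a monotone section of `f`
on its image, which forces `f (g 0)` to be the largest point of the image below `0` or the least
one above it; neither exists.
-/

open Set

theorem exists_monotone_surjective_of_countable (L : Type*) [LinearOrder L] [Countable L]
    [Nonempty L] : ∃ f : ℚ → L, Monotone f ∧ Function.Surjective f := by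
  have : Countable (L ×ₗ ℚ) := inferInstanceAs (Countable (L × ℚ))
  have : Nonempty (L ×ₗ ℚ) := inferInstanceAs (Nonempty (L × ℚ))
  obtain ⟨φ⟩ := Order.iso_of_countable_dense ℚ (L ×ₗ ℚ)
  exact ⟨fun q ↦ (ofLex (φ q)).1, Prod.Lex.monotone_fst_ofLex.comp φ.monotone,
    fun x ↦ ⟨φ.symm (toLex (x, 0)), by simp⟩⟩

theorem not_exists_monotone_comp_comp_eq_of_gap {α β : Type*} [Preorder α] [LinearOrder β]
    {f : α → β} (hf : Monotone f) (c : β)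
    (hbelow : ∀ y ∈ range f, y ≤ c → ∃ y' ∈ range f, y < y' ∧ y' ≤ c)
    (habove : ∀ y ∈ range f, c ≤ y → ∃ y' ∈ range f, c ≤ y' ∧ y' < y) :
    ¬ ∃ g : β → α, Monotone g ∧ f ∘ g ∘ f = f := by
  rintro ⟨g, hg, hfgf⟩
  have hsection : ∀ y ∈ range f, f (g y) = y := by
    rintro _ ⟨x, rfl⟩
    exact congrFun hfgf x
  rcases le_total (f (g c)) c with hle | hge
  · obtain ⟨y, hy, hlt, hyc⟩ := hbelow _ (mem_range_self _) hle
    exact hlt.not_ge ((hsection y hy).symm.trans_le (hf (hg hyc)))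
  · obtain ⟨y, hy, hcy, hlt⟩ := habove _ (mem_range_self _) hge
    exact hlt.not_ge ((hf (hg hcy)).trans_eq (hsection y hy))

section GapEmbedding

open Classical in
/-- Sends `Xm` into `(-2, 0)` and its complement into `(0, 2)`, so that `0` separates the two
parts even when no rational lies between them. -/
noncomputable def gapEmbedding (Xm : Set ℚ) (x : ℚ) : ℚ :=
  if x ∈ Xm then (orderIsoIooNegOneOne ℚ x : ℚ) - 1 else (orderIsoIooNegOneOne ℚ x : ℚ) + 1

variable {Xm Xp : Set ℚ}

theorem gapEmbedding_neg {x : ℚ} (hx : x ∈ Xm) : gapEmbedding Xm x < 0 := by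
  rw [gapEmbedding, if_pos hx]
  linarith [(orderIsoIooNegOneOne ℚ x).2.2]

theorem gapEmbedding_pos {x : ℚ} (hx : x ∉ Xm) : 0 < gapEmbedding Xm x := by
  rw [gapEmbedding, if_neg hx]
  linarith [(orderIsoIooNegOneOne ℚ x).2.1]

theorem gapEmbedding_strictMonoOn (hlt : ∀ a ∈ Xm, ∀ b ∈ Xp, a < b) :
    StrictMonoOn (gapEmbedding Xm) (Xm ∪ Xp) := by
  intro x hx y hy hxy
  have ht : (orderIsoIooNegOneOne ℚ x : ℚ) < orderIsoIooNegOneOne ℚ y :=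
    (orderIsoIooNegOneOne ℚ).strictMono hxy
  by_cases hxm : x ∈ Xm <;> by_cases hym : y ∈ Xm
  · rw [gapEmbedding, gapEmbedding, if_pos hxm, if_pos hym]
    linarith
  · exact (gapEmbedding_neg hxm).trans (gapEmbedding_pos hym)
  · exact absurd (hlt y hym x (hx.resolve_left hxm)) hxy.not_gt
  · rw [gapEmbedding, gapEmbedding, if_neg hxm, if_neg hym]
    linarith

theorem gapEmbedding_image_below (hlt : ∀ a ∈ Xm, ∀ b ∈ Xp, a < b)
    (hmax : ∀ x ∈ Xm, ∃ x' ∈ Xm, x < x') :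
    ∀ y ∈ gapEmbedding Xm '' (Xm ∪ Xp), y ≤ 0 →
      ∃ y' ∈ gapEmbedding Xm '' (Xm ∪ Xp), y < y' ∧ y' ≤ 0 := by
  rintro _ ⟨x, hx, rfl⟩ hle
  have hxm : x ∈ Xm := by_contra fun h ↦ (gapEmbedding_pos h).not_ge hle
  obtain ⟨x', hx', hxx'⟩ := hmax x hxm
  exact ⟨_, mem_image_of_mem _ (Or.inl hx'),
    gapEmbedding_strictMonoOn hlt hx (Or.inl hx') hxx', (gapEmbedding_neg hx').le⟩

theorem gapEmbedding_image_above (hlt : ∀ a ∈ Xm, ∀ b ∈ Xp, a < b)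
    (hmin : ∀ y ∈ Xp, ∃ y' ∈ Xp, y' < y) :
    ∀ y ∈ gapEmbedding Xm '' (Xm ∪ Xp), 0 ≤ y →
      ∃ y' ∈ gapEmbedding Xm '' (Xm ∪ Xp), 0 ≤ y' ∧ y' < y := by
  rintro _ ⟨x, hx, rfl⟩ hge
  have hxp : x ∈ Xp := hx.resolve_left fun h ↦ (gapEmbedding_neg h).not_ge hge
  obtain ⟨x', hx', hx'x⟩ := hmin x hxp
  have hx'm : x' ∉ Xm := fun h ↦ (hlt x' h x' hx').false
  exact ⟨_, mem_image_of_mem _ (Or.inr hx'), (gapEmbedding_pos hx'm).le,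
    gapEmbedding_strictMonoOn hlt (Or.inr hx') hx hx'x⟩

end GapEmbedding

theorem stmt_13_general (X Xm Xp : Set ℚ) (hm : Xm.Nonempty)
    (hunion : X = Xm ∪ Xp)
    (hlt : ∀ a ∈ Xm, ∀ b ∈ Xp, a < b)
    (α β : ℝ)
    (hα : IsLUB (((↑) : ℚ → ℝ) '' Xm) α)
    (hβ : IsGLB (((↑) : ℚ → ℝ) '' Xp) β)
    (hαX : ∀ x ∈ X, (x : ℝ) ≠ α)
    (hβX : ∀ x ∈ X, (x : ℝ) ≠ β) :
    ∃ f : ℚ → ℚ, Monotone f ∧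
      ¬ (∃ g : ℚ → ℚ, Monotone g ∧ f ∘ g ∘ f = f) ∧
      Nonempty (↥(Set.range f) ≃o ↥X) := by
  subst hunion
  have hmax : ∀ x ∈ Xm, ∃ x' ∈ Xm, x < x' := by
    intro x hx
    obtain ⟨_, ⟨x', hx', rfl⟩, hxx', -⟩ :=
      hα.exists_between ((hα.1 (mem_image_of_mem _ hx)).lt_of_ne (hαX x (Or.inl hx)))
    exact ⟨x', hx', by exact_mod_cast hxx'⟩
  have hmin : ∀ y ∈ Xp, ∃ y' ∈ Xp, y' < y := by
    intro y hy
    obtain ⟨_, ⟨y', hy', rfl⟩, -, hy'y⟩ :=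
      hβ.exists_between ((hβ.1 (mem_image_of_mem _ hy)).lt_of_ne' (hβX y (Or.inr hy)))
    exact ⟨y', hy', by exact_mod_cast hy'y⟩
  have : Nonempty ↥(Xm ∪ Xp) := (hm.mono subset_union_left).to_subtype
  obtain ⟨s, hs, hs_surj⟩ := exists_monotone_surjective_of_countable ↥(Xm ∪ Xp)
  have he := gapEmbedding_strictMonoOn hlt
  have hrange : range (gapEmbedding Xm ∘ (↑) ∘ s) = gapEmbedding Xm '' (Xm ∪ Xp) := by
    rw [← Function.comp_assoc, hs_surj.range_comp, range_comp, Subtype.range_coe]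
  have hf : Monotone (gapEmbedding Xm ∘ (↑) ∘ s) :=
    fun a b hab ↦ he.monotoneOn (s a).2 (s b).2 (hs hab)
  refine ⟨_, hf, not_exists_monotone_comp_comp_eq_of_gap hf 0 ?_ ?_,
    ⟨(OrderIso.setCongr _ _ hrange).trans (he.orderIso _ _).symm⟩⟩
  · rw [hrange]
    exact gapEmbedding_image_below hlt hmax
  · rw [hrange]
    exact gapEmbedding_image_above hlt hmin

/-- if `X ⊆ ℚ` splits as `X₋ ∪ X₊` with `X₋ < X₊`, both parts
nonempty, and neither `sup X₋` nor `inf X₊` (computed in ℝ) belongs to `X`,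
then there is a non-regular order-preserving map `ℚ → ℚ` whose image is
order-isomorphic to `X`. -/
theorem stmt_13 (X Xm Xp : Set ℚ) (hm : Xm.Nonempty) (hp : Xp.Nonempty)
    (hunion : X = Xm ∪ Xp) (hdisj : Disjoint Xm Xp)
    (hlt : ∀ a ∈ Xm, ∀ b ∈ Xp, a < b)
    (α β : ℝ)
    (hα : IsLUB (((↑) : ℚ → ℝ) '' Xm) α)
    (hβ : IsGLB (((↑) : ℚ → ℝ) '' Xp) β)
    (hαX : ∀ x ∈ X, (x : ℝ) ≠ α)
    (hβX : ∀ x ∈ X, (x : ℝ) ≠ β) :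
    ∃ f : ℚ → ℚ, Monotone f ∧
      ¬ (∃ g : ℚ → ℚ, Monotone g ∧ f ∘ g ∘ f = f) ∧
      Nonempty (↥(Set.range f) ≃o ↥X) :=
  stmt_13_general X Xm Xp hm hunion hlt α β hα hβ hαX hβX
end

section
/- Let Ω be a countable linearly ordered set whose group of order-automorphisms Aut(Ω) is countable, and let f be an order-automorphism of Ω. Then only finitely many of the orbitals U_f(y), as y ranges over Ω, are infinite sets; that is, the collection {U_f(y) : y ∈ Ω, U_f(y) is infinite} is a finite set of subsets of Ω. -/
/-- The orbital of `x` under the order-automorphism `f`: all points lying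
between two iterates `f^m x` and `f^n x`. -/
def orbital {Ω : Type} [LinearOrder Ω] (f : Ω ≃o Ω) (x : Ω) : Set Ω :=
  {y | ∃ m n : ℤ, (f ^ m) x ≤ y ∧ y ≤ (f ^ n) x}

namespace OrbitalAux

open scoped Classical

variable {Ω : Type} [LinearOrder Ω] (f : Ω ≃o Ω)

lemma zpow_add_apply (a b : ℤ) (x : Ω) : (f ^ (a + b)) x = (f ^ a) ((f ^ b) x) := by
  rw [zpow_add]; rfl

lemma mem_orbital_self (x : Ω) : x ∈ orbital f x :=
  ⟨0, 0, by simp, by simp⟩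

lemma apply_mem_orbital (x : Ω) : f x ∈ orbital f x :=
  ⟨1, 1, by simp, by simp⟩

lemma symm_apply_mem_orbital (x : Ω) : f.symm x ∈ orbital f x :=
  ⟨-1, -1, by simp; rfl, by simp; rfl⟩

lemma orbital_subset_of_mem {x y : Ω} (h : y ∈ orbital f x) :
    orbital f y ⊆ orbital f x := by
  obtain ⟨m, n, hm, hn⟩ := h
  rintro z ⟨a, b, ha, hb⟩
  refine ⟨a + m, b + n, ?_, ?_⟩
  · calc (f ^ (a + m)) x = (f ^ a) ((f ^ m) x) := zpow_add_apply f a m x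
      _ ≤ (f ^ a) y := (f ^ a).monotone hm
      _ ≤ z := ha
  · calc z ≤ (f ^ b) y := hb
      _ ≤ (f ^ b) ((f ^ n) x) := (f ^ b).monotone hn
      _ = (f ^ (b + n)) x := (zpow_add_apply f b n x).symm

lemma mem_orbital_symm {x y : Ω} (h : y ∈ orbital f x) : x ∈ orbital f y := by
  obtain ⟨m, n, hm, hn⟩ := h
  refine ⟨-n, -m, ?_, ?_⟩
  · calc (f ^ (-n)) y ≤ (f ^ (-n)) ((f ^ n) x) := (f ^ (-n)).monotone hn
      _ = (f ^ (-n + n)) x := (zpow_add_apply f (-n) n x).symm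
      _ = x := by simp
  · calc x = (f ^ (-m + m)) x := by simp
      _ = (f ^ (-m)) ((f ^ m) x) := zpow_add_apply f (-m) m x
      _ ≤ (f ^ (-m)) y := (f ^ (-m)).monotone hm

lemma orbital_eq_of_mem {x y : Ω} (h : y ∈ orbital f x) :
    orbital f y = orbital f x :=
  subset_antisymm (orbital_subset_of_mem f h)
    (orbital_subset_of_mem f (mem_orbital_symm f h))

lemma orbital_convex {x u v z : Ω} (hu : u ∈ orbital f x) (hv : v ∈ orbital f x)
    (h1 : u ≤ z) (h2 : z ≤ v) : z ∈ orbital f x := by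
  obtain ⟨m, _, hm, _⟩ := hu
  obtain ⟨_, n, _, hn⟩ := hv
  exact ⟨m, n, hm.trans h1, h2.trans hn⟩

lemma orbital_lt {x y u v : Ω} (hxy : x < y) (hne : orbital f x ≠ orbital f y)
    (hu : u ∈ orbital f x) (hv : v ∈ orbital f y) : u < v := by
  by_contra h
  push_neg at h
  have hdisj : ∀ z, z ∈ orbital f x → z ∈ orbital f y → False := fun z h1 h2 =>
    hne ((orbital_eq_of_mem f h1).symm.trans (orbital_eq_of_mem f h2))
  rcases le_or_gt y u with h1 | h1
  · exact hdisj y (orbital_convex f (mem_orbital_self f x) hu hxy.le h1)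
      (mem_orbital_self f y)
  · exact hdisj u hu (orbital_convex f hv (mem_orbital_self f y) h h1.le)

/-- The function equal to `f` on the orbitals belonging to `T`, identity elsewhere. -/
noncomputable def glueFun (T : Set (Set Ω)) (x : Ω) : Ω :=
  if orbital f x ∈ T then f x else x

lemma glueFun_mem (T : Set (Set Ω)) (x : Ω) : glueFun f T x ∈ orbital f x := by
  unfold glueFun
  split
  · exact apply_mem_orbital f x
  · exact mem_orbital_self f x

lemma glue_strictMono (T : Set (Set Ω)) : StrictMono (glueFun f T) := by
  intro x y hxy
  by_cases he : orbital f x = orbital f y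
  · unfold glueFun
    rw [he]
    split
    · exact f.strictMono hxy
    · exact hxy
  · exact orbital_lt f hxy he (glueFun_mem f T x) (glueFun_mem f T y)

/-- The automorphism equal to `f` on the orbitals in `T`, identity elsewhere. -/
noncomputable def glue (T : Set (Set Ω)) : Ω ≃o Ω where
  toFun := glueFun f T
  invFun x := if orbital f x ∈ T then f.symm x else x
  left_inv x := by
    dsimp only [glueFun]
    by_cases h : orbital f x ∈ T
    · rw [if_pos h, if_pos (by rwa [orbital_eq_of_mem f (apply_mem_orbital f x)]),
        f.symm_apply_apply]
    · rw [if_neg h, if_neg h]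
  right_inv x := by
    dsimp only [glueFun]
    by_cases h : orbital f x ∈ T
    · rw [if_pos h, if_pos (by rwa [orbital_eq_of_mem f (symm_apply_mem_orbital f x)]),
        f.apply_symm_apply]
    · rw [if_neg h, if_neg h]
  map_rel_iff' := by
    intro a b
    exact (glue_strictMono f T).le_iff_le

lemma glue_apply (T : Set (Set Ω)) (x : Ω) :
    glue f T x = if orbital f x ∈ T then f x else x := rfl

lemma zpow_apply_eq_of_fixed {y : Ω} (h : f y = y) : ∀ m : ℤ, (f ^ m) y = y := by
  have hn : ∀ n : ℕ, (f ^ n) y = y := by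
    intro n
    induction n with
    | zero => simp
    | succ k ih =>
        have : (f ^ (k + 1)) y = (f ^ k) (f y) := by rw [pow_succ]; rfl
        rw [this, h, ih]
  intro m
  cases m with
  | ofNat n => simpa using hn n
  | negSucc n =>
      rw [zpow_negSucc]
      exact (OrderIso.symm_apply_eq _).2 (hn (n + 1)).symm

lemma orbital_finite_of_fixed {y : Ω} (h : f y = y) : (orbital f y).Finite := by
  have : orbital f y ⊆ {y} := by
    rintro z ⟨m, n, hm, hn⟩
    rw [zpow_apply_eq_of_fixed f h m] at hm
    rw [zpow_apply_eq_of_fixed f h n] at hn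
    exact le_antisymm hn hm
  exact (Set.finite_singleton y).subset this

end OrbitalAux

open OrbitalAux in
/-- if Ω is a countable linear order with countable automorphism
group, then any automorphism `f` has only finitely many infinite orbitals. -/
theorem stmt_15 (Ω : Type) [LinearOrder Ω] [Countable Ω]
    (hAut : Countable (Ω ≃o Ω)) (f : Ω ≃o Ω) :
    {s : Set Ω | (∃ y : Ω, s = orbital f y) ∧ s.Infinite}.Finite := by
  set O : Set (Set Ω) := {s : Set Ω | (∃ y : Ω, s = orbital f y) ∧ s.Infinite} with hO
  by_contra hfin
  have hinf : O.Infinite := hfin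
  haveI : Infinite ↥O := hinf.to_subtype
  let F : Set ↥O → (Ω ≃o Ω) := fun A => glue f (Subtype.val '' A)
  have key : ∀ A B : Set ↥O, F A = F B → ∀ U, U ∈ A → U ∈ B := by
    intro A B hAB U hU
    obtain ⟨⟨y, hy⟩, hinfU⟩ := U.2
    have hfy : f y ≠ y := by
      intro h
      exact (hy ▸ hinfU) (orbital_finite_of_fixed f h)
    by_contra hUB
    have h1 : (F A) y = f y := by
      rw [show (F A) y = _ from glue_apply f _ y, if_pos ⟨U, hU, hy⟩]
    have h2 : (F B) y = y := by
      rw [show (F B) y = _ from glue_apply f _ y, if_neg]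
      rintro ⟨V, hV, hVy⟩
      exact hUB (by rwa [show V = U from Subtype.ext (hVy.trans hy.symm)] at hV)
    exact hfy (by rw [← h1, hAB, h2])
  have hF : Function.Injective F := by
    intro A B h
    ext U
    exact ⟨key A B h U, key B A h.symm U⟩
  haveI : Countable (Set ↥O) := Function.Injective.countable hF
  obtain ⟨g, hg⟩ := exists_injective_nat (Set ↥O)
  exact Function.cantor_injective ((Infinite.natEmbedding ↥O) ∘ g)
    ((Infinite.natEmbedding ↥O).injective.comp hg)
end

section
/- Let Ω be a countable linearly ordered set whose group of order-automorphisms Aut(Ω) is countable, let f be an order-automorphism of Ω and x ∈ Ω with the orbital U_f(x) infinite. If a, b ∈ U_f(x) with a < b, then the group of order-automorphisms of the open interval (a, b) = {v ∈ Ω : a < v < b} (with the induced order) is trivial. -/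
namespace Stmt16

variable {Ω : Type} [LinearOrder Ω]

/-- Extension of an automorphism of `(a,b)` by the identity. -/
def extFun (a b : Ω) (φ : ↥(Set.Ioo a b) ≃o ↥(Set.Ioo a b)) (y : Ω) : Ω :=
  if h : y ∈ Set.Ioo a b then (φ ⟨y, h⟩ : Ω) else y

lemma extFun_of_mem (a b : Ω) (φ : ↥(Set.Ioo a b) ≃o ↥(Set.Ioo a b)) {y : Ω}
    (h : y ∈ Set.Ioo a b) : extFun a b φ y = (φ ⟨y, h⟩ : Ω) := dif_pos h

lemma extFun_of_notMem (a b : Ω) (φ : ↥(Set.Ioo a b) ≃o ↥(Set.Ioo a b)) {y : Ω}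
    (h : y ∉ Set.Ioo a b) : extFun a b φ y = y := dif_neg h

lemma extFun_mem (a b : Ω) (φ : ↥(Set.Ioo a b) ≃o ↥(Set.Ioo a b)) {y : Ω}
    (h : y ∈ Set.Ioo a b) : extFun a b φ y ∈ Set.Ioo a b := by
  rw [extFun_of_mem a b φ h]; exact (φ ⟨y, h⟩).2

lemma extFun_strictMono (a b : Ω) (φ : ↥(Set.Ioo a b) ≃o ↥(Set.Ioo a b)) :
    StrictMono (extFun a b φ) := by
  intro y z hyz
  by_cases hy : y ∈ Set.Ioo a b
  · by_cases hz : z ∈ Set.Ioo a b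
    · rw [extFun_of_mem a b φ hy, extFun_of_mem a b φ hz]
      exact_mod_cast φ.strictMono (show (⟨y, hy⟩ : ↥(Set.Ioo a b)) < ⟨z, hz⟩ from hyz)
    · rw [extFun_of_mem a b φ hy, extFun_of_notMem a b φ hz]
      have hbz : b ≤ z := le_of_not_gt fun hzb => hz ⟨hy.1.trans hyz, hzb⟩
      exact lt_of_lt_of_le (φ ⟨y, hy⟩).2.2 hbz
  · rw [extFun_of_notMem a b φ hy]
    by_cases hz : z ∈ Set.Ioo a b
    · rw [extFun_of_mem a b φ hz]
      have hya : y ≤ a := le_of_not_gt fun hay => hy ⟨hay, hyz.trans hz.2⟩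
      exact lt_of_le_of_lt hya (φ ⟨z, hz⟩).2.1
    · rw [extFun_of_notMem a b φ hz]; exact hyz

lemma extFun_leftInv (a b : Ω) (φ : ↥(Set.Ioo a b) ≃o ↥(Set.Ioo a b)) (y : Ω) :
    extFun a b φ.symm (extFun a b φ y) = y := by
  by_cases h : y ∈ Set.Ioo a b
  · rw [extFun_of_mem a b φ h, extFun_of_mem a b φ.symm (φ ⟨y, h⟩).2]
    simp
  · rw [extFun_of_notMem a b φ h, extFun_of_notMem a b φ.symm h]

/-- The extension as an order isomorphism of `Ω`. -/
def ext (a b : Ω) (φ : ↥(Set.Ioo a b) ≃o ↥(Set.Ioo a b)) : Ω ≃o Ω where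
  toFun := extFun a b φ
  invFun := extFun a b φ.symm
  left_inv := extFun_leftInv a b φ
  right_inv := by
    intro y
    have := extFun_leftInv a b φ.symm y
    simpa using this
  map_rel_iff' := by
    intro y z
    exact (extFun_strictMono a b φ).le_iff_le

lemma ext_apply (a b : Ω) (φ : ↥(Set.Ioo a b) ≃o ↥(Set.Ioo a b)) (y : Ω) :
    ext a b φ y = extFun a b φ y := rfl

section Glue

variable (f : Ω ≃o Ω) (a b : Ω) (N : ℤ) (Ψ : Ω ≃o Ω)

/-- The translated intervals. -/
def I (k : ℤ) : Set Ω := Set.Ioo ((f ^ (k * N)) a) ((f ^ (k * N)) b)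

lemma memI {k : ℤ} {y : Ω} : y ∈ I f a b N k ↔ (f ^ (k * N)).symm y ∈ Set.Ioo a b := by
  constructor
  · rintro ⟨h1, h2⟩
    exact ⟨(f ^ (k * N)).strictMono.lt_iff_lt.mp (by rwa [OrderIso.apply_symm_apply]),
      (f ^ (k * N)).strictMono.lt_iff_lt.mp (by rwa [OrderIso.apply_symm_apply])⟩
  · rintro ⟨h1, h2⟩
    refine ⟨?_, ?_⟩
    · have := (f ^ (k * N)).strictMono h1
      rwa [OrderIso.apply_symm_apply] at this
    · have := (f ^ (k * N)).strictMono h2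
      rwa [OrderIso.apply_symm_apply] at this

variable (hab : a < b) (hN : b ≤ (f ^ N) a)

include hN in
lemma step (j : ℤ) : (f ^ (j * N)) b ≤ (f ^ ((j + 1) * N)) a := by
  have h1 : (f ^ (j * N)) b ≤ (f ^ (j * N)) ((f ^ N) a) := (f ^ (j * N)).monotone hN
  have h2 : (f ^ (j * N)) ((f ^ N) a) = (f ^ ((j + 1) * N)) a := by
    rw [show (j + 1) * N = j * N + N by ring, zpow_add]; rfl
  rw [← h2]; exact h1

include hab hN in
lemma chain : ∀ (d : ℕ) (j : ℤ), (f ^ (j * N)) b ≤ (f ^ ((j + 1 + d) * N)) a := by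
  intro d
  induction d with
  | zero => intro j; simpa using step f a b N hN j
  | succ d ih =>
      intro j
      have h1 := ih j
      have h2 : (f ^ ((j + 1 + d) * N)) a < (f ^ ((j + 1 + d) * N)) b :=
        (f ^ ((j + 1 + d) * N)).strictMono hab
      have h3 := step f a b N hN (j + 1 + d)
      have h4 : (j + 1 + d) + 1 = j + 1 + ((d : ℤ) + 1) := by ring
      refine le_of_lt ?_
      calc (f ^ (j * N)) b ≤ (f ^ ((j + 1 + d) * N)) a := h1
        _ < (f ^ ((j + 1 + d) * N)) b := h2
        _ ≤ (f ^ (((j + 1 + d) + 1) * N)) a := h3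
        _ = (f ^ ((j + 1 + (d + 1 : ℕ)) * N)) a := by push_cast; rw [h4]

include hab hN in
lemma I_ordered {j k : ℤ} (hjk : j < k) : (f ^ (j * N)) b ≤ (f ^ (k * N)) a := by
  have hd : k = j + 1 + ((k - j - 1).toNat : ℤ) := by
    rw [Int.toNat_of_nonneg (by omega)]; ring
  rw [hd]; exact chain f a b N hab hN _ j

include hab hN in
lemma I_uniq {j k : ℤ} {y : Ω} (hj : y ∈ I f a b N j) (hk : y ∈ I f a b N k) : j = k := by
  rcases lt_trichotomy j k with h | h | h
  · exact absurd (hj.2.trans_le ((I_ordered f a b N hab hN h).trans hk.1.le)) (lt_irrefl y)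
  · exact h
  · exact absurd (hk.2.trans_le ((I_ordered f a b N hab hN h).trans hj.1.le)) (lt_irrefl y)

/-- Conjugate of `Ψ` living on the interval `I k`. -/
def c (k : ℤ) : Ω ≃o Ω := (f ^ (k * N)) * Ψ * (f ^ (k * N))⁻¹

lemma c_apply (k : ℤ) (y : Ω) : c f N Ψ k y = (f ^ (k * N)) (Ψ ((f ^ (k * N)).symm y)) := rfl

variable (hΨmem : ∀ y ∈ Set.Ioo a b, Ψ y ∈ Set.Ioo a b)
variable (hΨfix : ∀ y ∉ Set.Ioo a b, Ψ y = y)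

include hΨmem in
lemma c_mem {k : ℤ} {y : Ω} (hy : y ∈ I f a b N k) : c f N Ψ k y ∈ I f a b N k := by
  rw [memI] at hy ⊢
  rw [c_apply, OrderIso.symm_apply_apply]
  exact hΨmem _ hy

include hΨfix in
lemma c_fix {k : ℤ} {y : Ω} (hy : y ∉ I f a b N k) : c f N Ψ k y = y := by
  rw [memI] at hy
  rw [c_apply, hΨfix _ hy, OrderIso.apply_symm_apply]

open Classical in
/-- The glued map: apply `c k` on `I k` for `k ∈ S`, identity elsewhere. -/
noncomputable def FS (S : Set ℤ) (y : Ω) : Ω :=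
  if h : ∃ k ∈ S, y ∈ I f a b N k then c f N Ψ h.choose y else y

include hab hN in
lemma FS_of_mem {S : Set ℤ} {k : ℤ} {y : Ω} (hk : k ∈ S) (hy : y ∈ I f a b N k) :
    FS f a b N Ψ S y = c f N Ψ k y := by
  have h : ∃ k ∈ S, y ∈ I f a b N k := ⟨k, hk, hy⟩
  rw [FS, dif_pos h, I_uniq f a b N hab hN h.choose_spec.2 hy]

lemma FS_of_notMem {S : Set ℤ} {y : Ω} (h : ¬ ∃ k ∈ S, y ∈ I f a b N k) :
    FS f a b N Ψ S y = y := dif_neg h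

include hab hN hΨmem in
lemma FS_strictMono (S : Set ℤ) : StrictMono (FS f a b N Ψ S) := by
  intro y z hyz
  by_cases hy : ∃ k ∈ S, y ∈ I f a b N k
  · obtain ⟨k, hkS, hyk⟩ := hy
    rw [FS_of_mem f a b N Ψ hab hN hkS hyk]
    have hcy := c_mem f a b N Ψ hΨmem hyk
    by_cases hz : ∃ j ∈ S, z ∈ I f a b N j
    · obtain ⟨j, hjS, hzj⟩ := hz
      rw [FS_of_mem f a b N Ψ hab hN hjS hzj]
      have hcz := c_mem f a b N Ψ hΨmem hzj
      rcases lt_trichotomy k j with h | h | h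
      · exact hcy.2.trans_le ((I_ordered f a b N hab hN h).trans hcz.1.le)
      · subst h; exact (c f N Ψ k).strictMono hyz
      · exact absurd (hzj.2.trans_le ((I_ordered f a b N hab hN h).trans hyk.1.le))
          (not_lt.mpr hyz.le)
    · rw [FS_of_notMem f a b N Ψ hz]
      have hzk : z ∉ I f a b N k := fun hzk => hz ⟨k, hkS, hzk⟩
      have hbz : (f ^ (k * N)) b ≤ z :=
        le_of_not_gt fun hlt => hzk ⟨hyk.1.trans hyz, hlt⟩
      exact hcy.2.trans_le hbz
  · rw [FS_of_notMem f a b N Ψ hy]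
    by_cases hz : ∃ j ∈ S, z ∈ I f a b N j
    · obtain ⟨j, hjS, hzj⟩ := hz
      rw [FS_of_mem f a b N Ψ hab hN hjS hzj]
      have hcz := c_mem f a b N Ψ hΨmem hzj
      have hya : y ≤ (f ^ (j * N)) a :=
        le_of_not_gt fun hlt => hy ⟨j, hjS, hlt, hyz.trans hzj.2⟩
      exact hya.trans_lt hcz.1
    · rw [FS_of_notMem f a b N Ψ hz]; exact hyz

include hab hN hΨfix in
lemma FS_rightInv (S : Set ℤ) (y : Ω) :
    FS f a b N Ψ S (FS f a b N Ψ.symm S y) = y := by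
  have hmem' : ∀ z ∈ Set.Ioo a b, Ψ.symm z ∈ Set.Ioo a b := by
    intro z hz
    by_contra h
    have h1 : Ψ (Ψ.symm z) = Ψ.symm z := hΨfix _ h
    rw [OrderIso.apply_symm_apply] at h1
    rw [← h1] at h
    exact h hz
  by_cases h : ∃ k ∈ S, y ∈ I f a b N k
  · obtain ⟨k, hkS, hyk⟩ := h
    rw [FS_of_mem f a b N Ψ.symm hab hN hkS hyk]
    have h2 : c f N Ψ.symm k y ∈ I f a b N k := c_mem f a b N Ψ.symm hmem' hyk
    rw [FS_of_mem f a b N Ψ hab hN hkS h2]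
    simp [c_apply]
  · rw [FS_of_notMem f a b N Ψ.symm h, FS_of_notMem f a b N Ψ h]

end Glue

end Stmt16

set_option linter.unusedVariables false in
open Stmt16 in
/-- if Ω is a countable linear order with countable automorphism
group, `f` an automorphism with infinite orbital `U_f(x)`, and `a < b` both lie
in `U_f(x)`, then the interval `(a, b)` has trivial automorphism group. -/
theorem stmt_16 (Ω : Type) [LinearOrder Ω] [Countable Ω]
    (hAut : Countable (Ω ≃o Ω)) (f : Ω ≃o Ω) (x : Ω)
    (hU : (orbital f x).Infinite) (a b : Ω)
    (ha : a ∈ orbital f x) (hb : b ∈ orbital f x) (hab : a < b)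
    (φ : ↥(Set.Ioo a b) ≃o ↥(Set.Ioo a b)) :
    φ = OrderIso.refl ↥(Set.Ioo a b) := by
  by_contra hφ
  -- get a point moved by φ
  obtain ⟨v, hv⟩ : ∃ v, φ v ≠ v := by
    by_contra h'
    push_neg at h'
    exact hφ (by ext w; exact congrArg Subtype.val (h' w))
  -- find N with b ≤ f^N a
  obtain ⟨m, _, hm, _⟩ := ha
  obtain ⟨_, n, _, hn⟩ := hb
  set N : ℤ := n - m with hNdef
  have hN : b ≤ (f ^ N) a := by
    have h1 : (f ^ N) ((f ^ m) x) ≤ (f ^ N) a := (f ^ N).monotone hm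
    have hNm : N + m = n := by omega
    have h2 : (f ^ N) ((f ^ m) x) = (f ^ n) x := by
      calc (f ^ N) ((f ^ m) x) = (f ^ (N + m)) x := by rw [zpow_add]; rfl
        _ = (f ^ n) x := by rw [hNm]
    exact hn.trans (h2 ▸ h1)
  -- the extension Ψ
  set Ψ : Ω ≃o Ω := ext a b φ with hΨdef
  have hΨmem : ∀ y ∈ Set.Ioo a b, Ψ y ∈ Set.Ioo a b := fun y hy => extFun_mem a b φ hy
  have hΨfix : ∀ y ∉ Set.Ioo a b, Ψ y = y := fun y hy => extFun_of_notMem a b φ hy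
  have hΨv : Ψ (v : Ω) ≠ (v : Ω) := by
    rw [hΨdef, ext_apply, extFun_of_mem a b φ v.2]
    intro h
    exact hv (Subtype.ext (by simpa using h))
  -- the family of automorphisms
  have hmono := FS_strictMono f a b N Ψ hab hN hΨmem
  have hsurj : ∀ S : Set ℤ, Function.Surjective (FS f a b N Ψ S) := by
    intro S z
    exact ⟨FS f a b N Ψ.symm S z, FS_rightInv f a b N Ψ hab hN hΨfix S z⟩
  set G : Set ℤ → (Ω ≃o Ω) :=
    fun S => StrictMono.orderIsoOfSurjective _ (hmono S) (hsurj S) with hGdef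
  have hGapp : ∀ S y, G S y = FS f a b N Ψ S y := fun S y => rfl
  -- injectivity
  have hw : ∀ k : ℤ, (f ^ (k * N)) (v : Ω) ∈ I f a b N k := by
    intro k
    rw [memI, OrderIso.symm_apply_apply]
    exact v.2
  have hkey : ∀ (S : Set ℤ) (k : ℤ), k ∈ S ↔ G S ((f ^ (k * N)) (v : Ω)) ≠ (f ^ (k * N)) (v : Ω) := by
    intro S k
    constructor
    · intro hk
      rw [hGapp, FS_of_mem f a b N Ψ hab hN hk (hw k), c_apply, OrderIso.symm_apply_apply]
      intro h
      exact hΨv ((f ^ (k * N)).injective h)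
    · intro h
      by_contra hk
      apply h
      rw [hGapp, FS_of_notMem]
      rintro ⟨j, hjS, hj⟩
      exact hk ((I_uniq f a b N hab hN hj (hw k)) ▸ hjS)
  have hGinj : Function.Injective G := by
    intro S S' hSS'
    ext k
    rw [hkey S k, hkey S' k, hSS']
  haveI := hAut
  have : Countable (Set ℤ) := Function.Injective.countable hGinj
  obtain ⟨g, hg⟩ := Countable.exists_injective_nat (Set ℤ)
  exact Function.cantor_injective (fun s => (Denumerable.eqv ℤ).symm (g s))
    ((Denumerable.eqv ℤ).symm.injective.comp hg)
end

section
/- Let Ω be a countable linearly ordered set whose group of order-automorphisms Aut(Ω) is countable, let f and g be order-automorphisms of Ω, and let x ∈ Ω. If the orbitals U_f(x) and U_g(x) are both infinite, then U_f(x) = U_g(x). -/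
/-!
Suppose `g` moves `x` but some `z ∈ U_f(x)` lies outside `U_g(x)`. Reversing the order if
necessary, `z > x`, so the convex set `U_g(x)` lies below `φ x` for `φ = f ^ n`. Cutting `φ` down
to its own orbital gives `P ≥ id` with `P x = φ x`, and `ψ = P * g'` (where `g' = g ^ (±1)` moves
`x` up) sends `x` above `U_g(x)` while its backward orbit from `x` is coinitial in `U_g(x)`. So
every point eventually leaves `U_g(x)` under the powers of `ψ`, and conjugating the restriction of
`g` to `U_g(x)` by a large power of `ψ` gives a nontrivial automorphism fixing any given finite set.
In a countable order this yields `2 ^ ℵ₀` automorphisms: along each branch of the binary tree,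
compose such automorphisms, each fixing the finitely many points (and preimages) already settled,
and take the pointwise limit.
-/

open Filter Function OrderDual

section Orbital

variable {Ω : Type} [LinearOrder Ω] {f : Ω ≃o Ω} {x y : Ω}

lemma zpow_apply_strictMono (hx : x < f x) : StrictMono fun n : ℤ => (f ^ n) x :=
  strictMono_int_of_lt_succ fun n => by
    simpa [zpow_add_one, RelIso.mul_apply] using (f ^ n).strictMono hx

lemma zpow_apply_antitone (hy : f y ≤ y) : Antitone fun n : ℤ => (f ^ n) y :=
  antitone_int_of_succ_le fun n => by
    simpa [zpow_add_one, RelIso.mul_apply] using (f ^ n).monotone hy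

lemma mem_orbital_self (f : Ω ≃o Ω) (x : Ω) : x ∈ orbital f x :=
  ⟨0, 0, by simp, by simp⟩

lemma ordConnected_orbital (f : Ω ≃o Ω) (x : Ω) : (orbital f x).OrdConnected :=
  ⟨fun _ ⟨m, _, hm, _⟩ _ ⟨_, n, _, hn⟩ _ hy => ⟨m, n, hm.trans hy.1, hy.2.trans hn⟩⟩

lemma zpow_apply_mem_orbital (k : ℤ) (hy : y ∈ orbital f x) : (f ^ k) y ∈ orbital f x := by
  obtain ⟨m, n, hm, hn⟩ := hy
  refine ⟨k + m, k + n, ?_, ?_⟩ <;> rw [zpow_add, RelIso.mul_apply]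
  exacts [(f ^ k).monotone hm, (f ^ k).monotone hn]

lemma apply_mem_orbital_iff : f y ∈ orbital f x ↔ y ∈ orbital f x :=
  ⟨fun h => by simpa using zpow_apply_mem_orbital (-1) h,
    fun h => by simpa using zpow_apply_mem_orbital 1 h⟩

lemma orbital_inv (f : Ω ≃o Ω) (x : Ω) : orbital f⁻¹ x = orbital f x := by
  ext y
  constructor <;> rintro ⟨m, n, hm, hn⟩ <;>
    exact ⟨-m, -n, by simpa [inv_zpow'] using hm, by simpa [inv_zpow'] using hn⟩

lemma orbital_eq_singleton (h : f x = x) : orbital f x = {x} := by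
  have hfix : ∀ n : ℤ, (f ^ n) x = x := fun n => by
    induction n using Int.induction_on with
    | zero => simp
    | succ n ih => rwa [zpow_add_one, RelIso.mul_apply, h]
    | pred n ih =>
      calc (f ^ (-(n : ℤ) - 1)) x = (f ^ (-(n : ℤ) - 1)) (f x) := by rw [h]
        _ = x := by rw [← RelIso.mul_apply, ← zpow_add_one, sub_add_cancel, ih]
  ext y
  constructor
  · rintro ⟨m, n, hm, hn⟩
    exact le_antisymm (hfix n ▸ hn) (hfix m ▸ hm)
  · rintro rfl
    exact mem_orbital_self f y

lemma apply_ne_self_of_infinite_orbital (h : (orbital f x).Infinite) : f x ≠ x := fun hx =>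
  h (orbital_eq_singleton hx ▸ Set.finite_singleton x)

lemma lt_apply_of_mem_orbital (hx : x < f x) (hy : y ∈ orbital f x) : y < f y := by
  by_contra! hfy
  obtain ⟨m, n, hm, hn⟩ := hy
  set j := max 0 (n - m + 1)
  have h1 : (f ^ (j + m)) x ≤ (f ^ j) y := by
    rw [zpow_add, RelIso.mul_apply]; exact (f ^ j).monotone hm
  have h2 : (f ^ j) y ≤ y := by simpa using zpow_apply_antitone hfy (le_max_left 0 (n - m + 1))
  have h3 : (f ^ n) x < (f ^ (j + m)) x := zpow_apply_strictMono hx (by omega)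
  exact lt_irrefl y (hn.trans_lt (h3.trans_le (h1.trans h2)))

end Orbital

section OrderIsoConstructions

variable {α : Type*} [LinearOrder α]

lemma exists_orderIso_eqOn_of_ordConnected (g : α ≃o α) {S : Set α} (hS : S.OrdConnected)
    (hgS : ∀ y, g y ∈ S ↔ y ∈ S) : ∃ e : α ≃o α, S.EqOn e g ∧ ∀ y ∉ S, e y = y := by
  classical
  have hmono : StrictMono (S.piecewise g id) := by
    intro y z hyz
    by_cases hy : y ∈ S <;> by_cases hz : z ∈ S <;> simp only [Set.piecewise_eq_of_mem,
      Set.piecewise_eq_of_notMem, hy, hz, not_false_eq_true, id]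
    · exact g.strictMono hyz
    · exact lt_of_not_ge fun h => hz (hS.out hy ((hgS y).2 hy) ⟨hyz.le, h⟩)
    · exact lt_of_not_ge fun h => hy (hS.out ((hgS z).2 hz) hz ⟨h, hyz.le⟩)
    · exact hyz
  have hsurj : Surjective (S.piecewise g id) := by
    intro z
    by_cases hz : z ∈ S
    · have : g.symm z ∈ S := by rwa [← hgS, g.apply_symm_apply]
      exact ⟨g.symm z, by simp [this]⟩
    · exact ⟨z, by simp [hz]⟩
  exact ⟨hmono.orderIsoOfSurjective _ hsurj, fun y hy => by simp [hy], fun y hy => by simp [hy]⟩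

lemma pow_apply_le_pow_apply {a b : α ≃o α} (h : ∀ y, a y ≤ b y) (k : ℕ) (y : α) :
    (a ^ k) y ≤ (b ^ k) y := by
  induction k with
  | zero => rfl
  | succ k ih =>
    simp only [pow_succ', RelIso.mul_apply]
    exact (a.monotone ih).trans (h _)

lemma exists_ne_one_fixing_finset {Q ψ : α ≃o α} {U : Set α} (hQ : Q ≠ 1)
    (hQU : ∀ y ∉ U, Q y = y) (hψ : ∀ a, ∀ᶠ n : ℤ in atTop, (ψ ^ n) a ∉ U) (F : Finset α) :
    ∃ e : α ≃o α, e ≠ 1 ∧ ∀ a ∈ F, e a = a := by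
  obtain ⟨N, hN⟩ := ((eventually_all_finset F).2 fun a _ => hψ a).exists
  refine ⟨(ψ ^ N)⁻¹ * Q * (ψ ^ N)⁻¹⁻¹, by rwa [Ne, conj_eq_one_iff], fun a ha => ?_⟩
  simp [RelIso.mul_apply, hQU _ (hN a ha)]

end OrderIsoConstructions

section Wandering

variable {Ω : Type} [LinearOrder Ω] {x : Ω}

lemma exists_le_orderIso_apply_eq {φ : Ω ≃o Ω} (hx : x < φ x) :
    ∃ P : Ω ≃o Ω, (∀ y, y ≤ P y) ∧ P x = φ x := by
  obtain ⟨P, hon, hoff⟩ :=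
    exists_orderIso_eqOn_of_ordConnected φ (ordConnected_orbital φ x) fun _ => apply_mem_orbital_iff
  refine ⟨P, fun y => ?_, hon (mem_orbital_self φ x)⟩
  by_cases hy : y ∈ orbital φ x
  · rw [hon hy]; exact (lt_apply_of_mem_orbital hx hy).le
  · rw [hoff y hy]

lemma orbital_subset_orbital_mul {P g : Ω ≃o Ω} (hP : ∀ y, y ≤ P y) (hg : x < g x)
    (hU : ∀ s ∈ orbital g x, s < (P * g) x) : orbital g x ⊆ orbital (P * g) x := by
  intro s hs
  have hinv : ∀ y, (P * g)⁻¹ y ≤ g⁻¹ y := fun y => by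
    rw [mul_inv_rev, RelIso.mul_apply]
    exact g⁻¹.monotone (by simpa using hP (P⁻¹ y))
  have hsψ := hU s hs
  obtain ⟨m, -, hm, -⟩ := hs
  refine ⟨-((-m).toNat : ℤ), 1, ?_, by simpa using hsψ.le⟩
  calc ((P * g) ^ (-((-m).toNat : ℤ))) x ≤ (g ^ (-((-m).toNat : ℤ))) x := by
        simpa only [zpow_neg, zpow_natCast, inv_pow] using pow_apply_le_pow_apply hinv _ x
    _ ≤ (g ^ m) x := (zpow_apply_strictMono hg).monotone (by omega)
    _ ≤ s := hm

lemma eventually_zpow_apply_notMem {ψ : Ω ≃o Ω} {U : Set Ω} (hx : x < ψ x)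
    (hU : U ⊆ orbital ψ x) (hUψ : ∀ s ∈ U, s < ψ x) (a : Ω) :
    ∀ᶠ n : ℤ in atTop, (ψ ^ n) a ∉ U := by
  by_cases ha : ∃ j : ℤ, (ψ ^ j) x ≤ a
  · obtain ⟨j, hj⟩ := ha
    filter_upwards [eventually_ge_atTop (1 - j)] with n hn hmem
    refine (hUψ _ hmem).not_ge ?_
    calc ψ x = (ψ ^ (1 : ℤ)) x := by simp
      _ ≤ (ψ ^ (n + j)) x := (zpow_apply_strictMono hx).monotone (by omega)
      _ = (ψ ^ n) ((ψ ^ j) x) := by rw [zpow_add, RelIso.mul_apply]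
      _ ≤ (ψ ^ n) a := (ψ ^ n).monotone hj
  · push Not at ha
    refine Eventually.of_forall fun n hmem => ?_
    obtain ⟨c, -, hc, -⟩ := hU hmem
    have : (ψ ^ n) a < (ψ ^ c) x := by
      simpa [← RelIso.mul_apply, ← zpow_add] using (ψ ^ n).strictMono (ha (c - n))
    exact hc.not_gt this

end Wandering

section Tree

variable {α : Type*} [LinearOrder α]

lemma exists_orderIso_eqOn_of_stable (p : ℕ → α ≃o α) (S : ℕ → Set α) (hS : ∀ y, ∃ n, y ∈ S n)
    (hp : ∀ n m, n ≤ m → ∀ y ∈ S n, p m y = p n y ∧ (p m).symm y = (p n).symm y) :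
    ∃ q : α ≃o α, ∀ n, ∀ y ∈ S n, q y = p n y := by
  choose N hN using hS
  have hstable : ∀ y m, N y ≤ m → p m y = p (N y) y := fun y m h => (hp _ m h y (hN y)).1
  have hmono : StrictMono fun y => p (N y) y := by
    intro y z hyz
    simp only [← hstable y _ (le_max_left _ (N z)), ← hstable z _ (le_max_right (N y) _)]
    exact (p _).strictMono hyz
  have hsurj : Surjective fun y => p (N y) y := by
    intro z
    set y := (p (N z)).symm z
    have hy : (p (max (N y) (N z))).symm z = y := (hp _ _ (le_max_right _ _) z (hN z)).2
    have h := (p (max (N y) (N z))).apply_symm_apply z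
    rw [hy] at h
    exact ⟨y, (hstable y _ (le_max_left _ (N z))).symm.trans h⟩
  refine ⟨hmono.orderIsoOfSurjective _ hsurj, fun n y hy => ?_⟩
  simp only [StrictMono.coe_orderIsoOfSurjective, ← hstable y _ (le_max_left _ n),
    (hp _ _ (le_max_right (N y) _) y hy).1]

variable (E : Finset α → α ≃o α) (W : Finset α → α) (v : ℕ → α)

def treeGuard (q : (α ≃o α) × Finset α) : Finset α := q.2 ∪ q.2.image q.1.symm

open Classical in
/-- Stage `n` of the branch `σ`: an automorphism `p` and a finite set `S` on which `p` and `p⁻¹`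
are already final. Composing with `E F`, which fixes `F = S ∪ p⁻¹ S`, changes neither; the branch
decides at stage `n` whether to compose, and the point `W F` moved by `E F` records the choice. -/
noncomputable def treeSeq (σ : Set ℕ) : ℕ → (α ≃o α) × Finset α
  | 0 => (1, ∅)
  | n + 1 =>
    let q := treeSeq σ n
    (if n ∈ σ then q.1 * E (treeGuard q) else q.1, insert (v n) (insert (W (treeGuard q)) q.2))

variable {E W v}

@[simp]
lemma treeSeq_zero (σ : Set ℕ) : treeSeq E W v σ 0 = (1, ∅) := rfl

open Classical in
lemma treeSeq_succ (σ : Set ℕ) (n : ℕ) : treeSeq E W v σ (n + 1) =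
    (if n ∈ σ then (treeSeq E W v σ n).1 * E (treeGuard (treeSeq E W v σ n))
      else (treeSeq E W v σ n).1,
    insert (v n) (insert (W (treeGuard (treeSeq E W v σ n))) (treeSeq E W v σ n).2)) := rfl

open Classical in
lemma treeSeq_succ_fst_apply (σ : Set ℕ) (n : ℕ) (y : α) : (treeSeq E W v σ (n + 1)).1 y =
    if n ∈ σ then (treeSeq E W v σ n).1 (E (treeGuard (treeSeq E W v σ n)) y)
      else (treeSeq E W v σ n).1 y := by
  rw [treeSeq_succ]
  split_ifs <;> rfl

lemma treeSeq_snd_mono (σ : Set ℕ) : Monotone fun n => (treeSeq E W v σ n).2 :=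
  monotone_nat_of_le_succ fun _ => (Finset.subset_insert _ _).trans (Finset.subset_insert _ _)

lemma treeSeq_stable_succ (hE : ∀ F, ∀ a ∈ F, E F a = a) (σ : Set ℕ) (n : ℕ) :
    ∀ y ∈ (treeSeq E W v σ n).2, (treeSeq E W v σ (n + 1)).1 y = (treeSeq E W v σ n).1 y ∧
      (treeSeq E W v σ (n + 1)).1.symm y = (treeSeq E W v σ n).1.symm y := by
  intro y hy
  set q := treeSeq E W v σ n
  have hfix : ∀ z ∈ q.2 ∪ q.2.image q.1.symm, E (treeGuard q) z = z := hE _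
  rw [treeSeq_succ]
  split_ifs
  · refine ⟨by rw [RelIso.mul_apply, hfix y (by simp [hy])], ?_⟩
    change (E (treeGuard q)).symm (q.1.symm y) = _
    exact (E _).symm_apply_eq.2 (hfix _ (by simp [hy])).symm
  · exact ⟨rfl, rfl⟩

lemma treeSeq_stable (hE : ∀ F, ∀ a ∈ F, E F a = a) (σ : Set ℕ) {n m : ℕ} (h : n ≤ m) :
    ∀ y ∈ (treeSeq E W v σ n).2, (treeSeq E W v σ m).1 y = (treeSeq E W v σ n).1 y ∧
      (treeSeq E W v σ m).1.symm y = (treeSeq E W v σ n).1.symm y := by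
  induction m, h using Nat.le_induction with
  | base => exact fun _ _ => ⟨rfl, rfl⟩
  | succ m hnm ih =>
    intro y hy
    obtain ⟨h1, h2⟩ := treeSeq_stable_succ hE σ m y (treeSeq_snd_mono σ hnm hy)
    exact ⟨h1.trans (ih y hy).1, h2.trans (ih y hy).2⟩

lemma exists_orderIso_eqOn_treeSeq (hE : ∀ F, ∀ a ∈ F, E F a = a) (hv : Surjective v) (σ : Set ℕ) :
    ∃ q : α ≃o α, ∀ n, ∀ y ∈ (treeSeq E W v σ n).2, q y = (treeSeq E W v σ n).1 y :=
  exists_orderIso_eqOn_of_stable _ (fun n => (treeSeq E W v σ n).2)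
    (fun y => (hv y).elim fun k hk => ⟨k + 1, by simp [treeSeq_succ, hk]⟩)
    fun _ _ h => treeSeq_stable hE σ h

lemma injective_of_eqOn_treeSeq (hW : ∀ F, E F (W F) ≠ W F) {q : Set ℕ → α ≃o α}
    (hq : ∀ σ n, ∀ y ∈ (treeSeq E W v σ n).2, q σ y = (treeSeq E W v σ n).1 y) : Injective q := by
  classical
  intro σ τ hστ
  have hmem : ∀ n, treeSeq E W v σ n = treeSeq E W v τ n → (n ∈ σ ↔ n ∈ τ) := by
    intro n h
    have hw : ∀ ρ, W (treeGuard (treeSeq E W v ρ n)) ∈ (treeSeq E W v ρ (n + 1)).2 :=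
      fun ρ => by simp [treeSeq_succ]
    have hσ := hq σ (n + 1) _ (hw σ)
    have hτ := hq τ (n + 1) _ (hw τ)
    rw [treeSeq_succ_fst_apply, hστ] at hσ
    rw [treeSeq_succ_fst_apply, ← h] at hτ
    have hmove := (treeSeq E W v σ n).1.injective.ne (hW (treeGuard (treeSeq E W v σ n)))
    split_ifs at hσ hτ with hnσ hnτ hnτ
    · exact iff_of_true hnσ hnτ
    · exact (hmove (hσ.symm.trans hτ)).elim
    · exact (hmove (hτ.symm.trans hσ)).elim
    · exact iff_of_false hnσ hnτ
  have hseq : ∀ n, treeSeq E W v σ n = treeSeq E W v τ n := by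
    intro n
    induction n with
    | zero => rfl
    | succ n ih => rw [treeSeq_succ, treeSeq_succ, ih, if_congr (hmem n ih) rfl rfl]
  ext n
  exact hmem n (hseq n)

theorem uncountable_orderIso_of_forall_finset [Countable α]
    (H : ∀ F : Finset α, ∃ e : α ≃o α, e ≠ 1 ∧ ∀ a ∈ F, e a = a) : Uncountable (α ≃o α) := by
  choose E hE_ne hE using H
  choose W hW using fun F => DFunLike.ne_iff.1 (hE_ne F)
  have : Nonempty α := ⟨W ∅⟩
  obtain ⟨v, hv⟩ := exists_surjective_nat α
  choose q hq using exists_orderIso_eqOn_treeSeq (W := W) hE hv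
  have : Uncountable (Set ℕ) := uncountable_iff_forall_not_surjective.2 cantor_surjective
  exact (injective_of_eqOn_treeSeq hW hq).uncountable

end Tree

section Main

variable {Ω : Type} [LinearOrder Ω]

theorem uncountable_orderIso_of_orbital_lt [Countable Ω] {g φ : Ω ≃o Ω} {x : Ω} (hgx : g x ≠ x)
    (hφ : ∀ s ∈ orbital g x, s < φ x) : Uncountable (Ω ≃o Ω) := by
  obtain ⟨g', hg'x, hg'⟩ : ∃ g' : Ω ≃o Ω, x < g' x ∧ orbital g' x = orbital g x := by
    rcases hgx.lt_or_gt with h | h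
    · exact ⟨g⁻¹, by simpa using g⁻¹.strictMono h, orbital_inv g x⟩
    · exact ⟨g, h, rfl⟩
  obtain ⟨P, hP, hPx⟩ := exists_le_orderIso_apply_eq (hφ x (mem_orbital_self g x))
  have hψ : ∀ s ∈ orbital g x, s < (P * g') x := fun s hs =>
    (hφ s hs).trans (hPx ▸ P.strictMono hg'x)
  have hsub : orbital g x ⊆ orbital (P * g') x := by
    rw [← hg'] at hψ ⊢
    exact orbital_subset_orbital_mul hP hg'x hψ
  obtain ⟨Q, hQ, hQoff⟩ := exists_orderIso_eqOn_of_ordConnected g (ordConnected_orbital g x)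
    fun _ => apply_mem_orbital_iff
  have hQ1 : Q ≠ 1 := fun h => hgx (by simpa [h] using (hQ (mem_orbital_self g x)).symm)
  exact uncountable_orderIso_of_forall_finset <| exists_ne_one_fixing_finset hQ1 hQoff <|
    eventually_zpow_apply_notMem (hψ x (mem_orbital_self g x)) hsub hψ

lemma dual_zpow (f : Ω ≃o Ω) (n : ℤ) : f.dual ^ n = (f ^ n).dual :=
  (map_zpow (⟨⟨OrderIso.dual, rfl⟩, fun _ _ => rfl⟩ : (Ω ≃o Ω) →* (Ωᵒᵈ ≃o Ωᵒᵈ)) f n).symm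

lemma orbital_dual (f : Ω ≃o Ω) (x : Ω) :
    orbital f.dual (toDual x) = ofDual ⁻¹' orbital f x := by
  ext y
  simp only [orbital, Set.mem_ofPred_eq, Set.mem_preimage, dual_zpow, OrderIso.dual_apply,
    toDual_le, le_toDual, ofDual_toDual]
  exact ⟨fun ⟨m, n, h1, h2⟩ => ⟨n, m, h2, h1⟩, fun ⟨m, n, h1, h2⟩ => ⟨n, m, h2, h1⟩⟩

theorem orbital_subset_orbital [Countable Ω] [Countable (Ω ≃o Ω)] (f : Ω ≃o Ω) {g : Ω ≃o Ω}
    {x : Ω} (hgx : g x ≠ x) : orbital f x ⊆ orbital g x := by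
  intro z ⟨m, n, hm, hn⟩
  by_contra hzg
  rcases (ne_of_mem_of_not_mem (mem_orbital_self g x) hzg).lt_or_gt with hxz | hzx
  · refine not_uncountable (uncountable_orderIso_of_orbital_lt (φ := f ^ n) hgx fun s hs => ?_)
    refine (lt_of_not_ge fun h => hzg ?_).trans_le hn
    exact (ordConnected_orbital g x).out (mem_orbital_self g x) hs ⟨hxz.le, h⟩
  · have : Countable Ωᵒᵈ := ‹Countable Ω›
    have : Countable (Ωᵒᵈ ≃o Ωᵒᵈ) :=
      Surjective.countable (f := OrderIso.dual (α := Ω) (β := Ω)) fun e => ⟨e.dual, rfl⟩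
    refine not_uncountable (uncountable_orderIso_of_orbital_lt (g := g.dual) (φ := (f ^ m).dual)
      (x := toDual x) (by simpa using hgx) fun s hs => ?_)
    rw [orbital_dual] at hs
    refine hm.trans_lt (lt_of_not_ge fun h => hzg ?_)
    exact (ordConnected_orbital g x).out hs (mem_orbital_self g x) ⟨h, hzx.le⟩

end Main

/-- if Ω is a countable linear order with countable automorphism
group and `f`, `g` are automorphisms whose orbitals at `x` are both infinite,
then those orbitals coincide. -/
theorem stmt_17 (Ω : Type) [LinearOrder Ω] [Countable Ω]
    (hAut : Countable (Ω ≃o Ω)) (f g : Ω ≃o Ω) (x : Ω)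
    (hf : (orbital f x).Infinite) (hg : (orbital g x).Infinite) :
    orbital f x = orbital g x :=
  (orbital_subset_orbital f (apply_ne_self_of_infinite_orbital hg)).antisymm
    (orbital_subset_orbital g (apply_ne_self_of_infinite_orbital hf))
end
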